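/- arXiv:math/0508350 — 13 statements merged into one kernel-verified Lean document; each statement's English description precedes it below -/
import Mathlib

section
/- Let p(x) = Σ_α c_α x^α be a homogeneous real polynomial of degree d in n variables (the sum over the finitely many exponent multi-indices α in the support of p), let D ⊆ ℝⁿ be a homogeneous domain (x ∈ D implies γx ∈ D for every real scalar γ), and suppose p_min := inf{ |p(x)| : x ∈ D̄, ‖x‖₂ = 1 } > 0, where D̄ is the closure of D. Let τ ≥ 0 and let q(x) = Σ_α c_α Δ_α x^α, where for each α in the support of p, Δ_α is a real number with |Δ_α − 1| ≤ τ. Then for every x ∈ D one has |q(x) − p(x)| ≤ ((Σ_α |c_α|) · τ / p_min) · |p(x)|. -/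
/-!
Each term of `q - p` is `c_α (Δ_α - 1) x^α`, and since `|x_i| ≤ ‖x‖₂` and `|α| = d` it is at most
`|c_α| τ ‖x‖₂^d` in absolute value. Homogeneity gives `|p x| = ‖x‖₂^d |p (x / ‖x‖₂)| ≥ p_min ‖x‖₂^d`,
so `‖x‖₂^d ≤ |p x| / p_min`.
-/

open MvPolynomial

namespace MvPolynomial

variable {σ R : Type*}

theorem IsHomogeneous.eval_smul [CommSemiring R] {φ : MvPolynomial σ R} {n : ℕ}
    (hφ : φ.IsHomogeneous n) (c : R) (x : σ → R) :
    eval (c • x) φ = c ^ n * eval x φ := by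
  simp only [eval_eq, Finset.mul_sum]
  refine Finset.sum_congr rfl fun s hs => ?_
  simp only [Pi.smul_apply, smul_eq_mul, mul_pow, Finset.prod_mul_distrib,
    Finset.prod_pow_eq_pow_sum, ← hφ.degree_eq_sum_deg_support hs]
  ring

theorem eval_sum_monomial_coeff_mul_sub_eval [CommRing R] (φ : MvPolynomial σ R)
    (Δ : (σ →₀ ℕ) → R) (x : σ → R) :
    eval x (∑ s ∈ φ.support, monomial s (coeff s φ * Δ s)) - eval x φ =
      ∑ s ∈ φ.support, coeff s φ * (Δ s - 1) * s.prod fun i k => x i ^ k := by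
  rw [map_sum, eval_eq x φ, ← Finset.sum_sub_distrib]
  refine Finset.sum_congr rfl fun s _ => ?_
  rw [eval_monomial]
  simp only [Finsupp.prod]
  ring

end MvPolynomial

theorem Finsupp.abs_prod_pow_le {ι : Type*} (s : ι →₀ ℕ) {x : ι → ℝ} {r : ℝ}
    (hx : ∀ i, |x i| ≤ r) : |s.prod fun i k => x i ^ k| ≤ r ^ s.degree := by
  rw [Finsupp.prod, Finset.abs_prod, Finsupp.degree_apply, ← Finset.prod_pow_eq_pow_sum]
  gcongr with i
  rw [abs_pow]
  exact pow_le_pow_left₀ (abs_nonneg _) (hx i) _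

theorem abs_le_sqrt_sum_sq {ι : Type*} [Fintype ι] (x : ι → ℝ) (i : ι) :
    |x i| ≤ √(∑ j, x j ^ 2) :=
  Real.abs_le_sqrt <| Finset.single_le_sum (f := fun j => x j ^ 2) (fun _ _ => sq_nonneg _)
    (Finset.mem_univ i)

theorem exists_sum_sq_eq_one_and_eq_sqrt_smul {ι : Type*} [Fintype ι] {D : Set (ι → ℝ)}
    (hD : ∀ x ∈ D, ∀ γ : ℝ, γ • x ∈ D) {u₀ : ι → ℝ} (hu₀ : u₀ ∈ closure D)
    (hu₀_one : ∑ i, u₀ i ^ 2 = 1) {x : ι → ℝ} (hx : x ∈ D) :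
    ∃ u ∈ closure D, ∑ i, u i ^ 2 = 1 ∧ x = √(∑ i, x i ^ 2) • u := by
  by_cases hx0 : x = 0
  · exact ⟨u₀, hu₀, hu₀_one, by simp [hx0]⟩
  obtain ⟨i, hi⟩ := Function.ne_iff.mp hx0
  have hpos : 0 < ∑ i, x i ^ 2 :=
    (Finset.sum_pos_iff_of_nonneg fun j _ => sq_nonneg (x j)).mpr
      ⟨i, Finset.mem_univ i, sq_pos_of_ne_zero hi⟩
  have hr : √(∑ i, x i ^ 2) ≠ 0 := (Real.sqrt_pos.mpr hpos).ne'
  refine ⟨(√(∑ i, x i ^ 2))⁻¹ • x, subset_closure (hD x hx _), ?_, by rw [smul_inv_smul₀ hr]⟩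
  simp only [Pi.smul_apply, smul_eq_mul, mul_pow, ← Finset.mul_sum, inv_pow,
    Real.sq_sqrt hpos.le, inv_mul_cancel₀ hpos.ne']

theorem MvPolynomial.IsHomogeneous.sInf_mul_pow_le_abs_eval {ι : Type*} [Fintype ι]
    {p : MvPolynomial ι ℝ} {d : ℕ} (hp : p.IsHomogeneous d) {D : Set (ι → ℝ)}
    (hD : ∀ x ∈ D, ∀ γ : ℝ, γ • x ∈ D)
    (hpos : 0 < sInf {y : ℝ | ∃ x ∈ closure D, ∑ i, x i ^ 2 = 1 ∧ y = |eval x p|})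
    {x : ι → ℝ} (hx : x ∈ D) :
    sInf {y : ℝ | ∃ x ∈ closure D, ∑ i, x i ^ 2 = 1 ∧ y = |eval x p|} *
      √(∑ i, x i ^ 2) ^ d ≤ |eval x p| := by
  set S := {y : ℝ | ∃ x ∈ closure D, ∑ i, x i ^ 2 = 1 ∧ y = |eval x p|}
  -- `sInf ∅ = 0`, so positivity of the infimum provides a unit vector in `closure D`.
  obtain ⟨_, u₀, hu₀, hu₀_one, rfl⟩ : S.Nonempty := by
    contrapose! hpos
    rw [hpos, Real.sInf_empty]
  obtain ⟨u, hu, hu_one, hxu⟩ := exists_sum_sq_eq_one_and_eq_sqrt_smul hD hu₀ hu₀_one hx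
  have hS_le : sInf S ≤ |eval u p| :=
    csInf_le ⟨0, fun y ⟨_, _, _, hy⟩ => hy ▸ abs_nonneg _⟩ ⟨u, hu, hu_one, rfl⟩
  conv_rhs => rw [hxu, hp.eval_smul, abs_mul, abs_pow, abs_of_nonneg (Real.sqrt_nonneg _)]
  rw [mul_comm]
  gcongr

theorem stmt_1_general (n d : ℕ) (p : MvPolynomial (Fin n) ℝ) (hp : p.IsHomogeneous d)
    (D : Set (Fin n → ℝ)) (hD : ∀ x ∈ D, ∀ γ : ℝ, γ • x ∈ D)
    (pmin : ℝ)
    (hpmin_def : pmin = sInf {y : ℝ | ∃ x ∈ closure D,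
      (∑ i, (x i) ^ 2) = 1 ∧ y = |eval x p|})
    (hpmin : 0 < pmin)
    (τ : ℝ)
    (Δ : (Fin n →₀ ℕ) → ℝ) (hΔ : ∀ α ∈ p.support, |Δ α - 1| ≤ τ)
    (q : MvPolynomial (Fin n) ℝ)
    (hq : q = ∑ α ∈ p.support, monomial α (coeff α p * Δ α)) :
    ∀ x ∈ D, |eval x q - eval x p| ≤
      ((∑ α ∈ p.support, |coeff α p|) * τ / pmin) * |eval x p| := by
  intro x hx
  set r := √(∑ i, x i ^ 2)
  have hr_le : r ^ d ≤ |eval x p| / pmin := by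
    rw [le_div_iff₀ hpmin, mul_comm, hpmin_def]
    exact hp.sInf_mul_pow_le_abs_eval hD (hpmin_def ▸ hpmin) hx
  have hterm : ∀ α ∈ p.support, |coeff α p * (Δ α - 1) * α.prod fun i k => x i ^ k| ≤
      |coeff α p| * τ * (|eval x p| / pmin) := by
    intro α hα
    have hτ : 0 ≤ τ := (abs_nonneg _).trans (hΔ α hα)
    have hmon : |α.prod fun i k => x i ^ k| ≤ r ^ d :=
      hp.degree_eq_sum_deg_support hα ▸ α.abs_prod_pow_le (abs_le_sqrt_sum_sq x)
    rw [abs_mul, abs_mul]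
    gcongr
    exacts [hΔ α hα, hmon.trans hr_le]
  rw [hq, eval_sum_monomial_coeff_mul_sub_eval]
  calc _ ≤ ∑ α ∈ p.support, |coeff α p * (Δ α - 1) * α.prod fun i k => x i ^ k| :=
        Finset.abs_sum_le_sum_abs _ _
    _ ≤ ∑ α ∈ p.support, |coeff α p| * τ * (|eval x p| / pmin) := Finset.sum_le_sum hterm
    _ = _ := by rw [← Finset.sum_mul, ← Finset.sum_mul]; ring

/-- Quantitative accuracy of term-by-term evaluation of a homogeneous
polynomial bounded away from zero on the unit sphere within a homogeneous domain. -/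
theorem stmt_1 (n d : ℕ) (p : MvPolynomial (Fin n) ℝ) (hp : p.IsHomogeneous d)
    (D : Set (Fin n → ℝ)) (hD : ∀ x ∈ D, ∀ γ : ℝ, γ • x ∈ D)
    (pmin : ℝ)
    (hpmin_def : pmin = sInf {y : ℝ | ∃ x ∈ closure D,
      (∑ i, (x i) ^ 2) = 1 ∧ y = |eval x p|})
    (hpmin : 0 < pmin)
    (τ : ℝ) (hτ : 0 ≤ τ)
    (Δ : (Fin n →₀ ℕ) → ℝ) (hΔ : ∀ α ∈ p.support, |Δ α - 1| ≤ τ)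
    (q : MvPolynomial (Fin n) ℝ)
    (hq : q = ∑ α ∈ p.support, monomial α (coeff α p * Δ α)) :
    ∀ x ∈ D, |eval x q - eval x p| ≤
      ((∑ α ∈ p.support, |coeff α p|) * τ / pmin) * |eval x p| :=
  stmt_1_general n d p hp D hD pmin hpmin_def hpmin τ Δ hΔ q hq
end

section
/- Let n ≥ 1 and let p ∈ ℂ[x₁,…,xₙ] be a nonconstant polynomial whose zero set V(p) is allowable. Then V(p) is a finite union of allowable hyperplanes; that is, there are finitely many hyperplanes H₁, …, H_s, each equal to some Z_i, S_{ij}, or D_{ij}, with V(p) = H₁ ∪ ⋯ ∪ H_s. -/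
/-! Each allowable hyperplane is the zero set of a prime linear form. As `p ≠ 0`, `V(p) ≠ ℂⁿ`,
so the allowable description of `V(p)` involves no intersection of zero hyperplanes, and `V(p)`
lies in the union of the finitely many hyperplanes occurring in it. By the Nullstellensatz `p`
divides a power of the product of their linear forms, so every prime factor of `p` is associate
to one of them. Since every point of `V(p)` is a zero of some prime factor of `p`, `V(p)` is the
union of the hyperplanes whose linear form divides `p`. -/

/-- An allowable hyperplane in `ℂⁿ`: one of `{x_i = 0}`, `{x_i + x_j = 0}`, `{x_i - x_j = 0}`. -/
def IsAllowableHyperplane (n : ℕ) (H : Set (Fin n → ℂ)) : Prop :=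
  (∃ i : Fin n, H = {x | x i = 0}) ∨
  (∃ i j : Fin n, i ≠ j ∧ H = {x | x i + x j = 0}) ∨
  (∃ i j : Fin n, i ≠ j ∧ H = {x | x i - x j = 0})

/-- An allowable set: a finite union of finite intersections of allowable hyperplanes. -/
def IsAllowable (n : ℕ) (A : Set (Fin n → ℂ)) : Prop :=
  ∃ (k : ℕ) (m : Fin k → ℕ) (H : (i : Fin k) → Fin (m i) → Set (Fin n → ℂ)),
    (∀ i j, IsAllowableHyperplane n (H i j)) ∧ A = ⋃ i, ⋂ j, H i j

theorem Set.iUnion_iInter_subset_iUnion_sigma {α ι : Type*} {κ : ι → Type*}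
    {s : ∀ i, κ i → Set α} (h : ⋃ i, ⋂ j, s i j ≠ univ) :
    ⋃ i, ⋂ j, s i j ⊆ ⋃ t : Σ i, κ i, s t.1 t.2 := by
  intro x hx
  obtain ⟨i, hi⟩ := mem_iUnion.mp hx
  obtain ⟨j⟩ : Nonempty (κ i) := by
    by_contra hκ
    have : IsEmpty (κ i) := not_nonempty_iff.mp hκ
    exact h (eq_univ_of_univ_subset fun y _ => mem_iUnion.mpr ⟨i, by simp⟩)
  exact mem_iUnion.mpr ⟨⟨i, j⟩, mem_iInter.mp hi j⟩

theorem Set.exists_fin_iUnion_eq {α ι : Type*} [Finite ι] {P : Set α → Prop}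
    {s : ι → Set α} (hs : ∀ i, P (s i)) :
    ∃ (n : ℕ) (t : Fin n → Set α), (∀ r, P (t r)) ∧ ⋃ i, s i = ⋃ r, t r := by
  have := Fintype.ofFinite ι
  let e := Fintype.equivFin ι
  exact ⟨_, s ∘ e.symm, fun r => hs _, (e.symm.iSup_comp (g := s)).symm⟩

theorem UniqueFactorizationMonoid.exists_prime_dvd_of_map_eq_zero {R S : Type*} [CommRing R]
    [IsDomain R] [UniqueFactorizationMonoid R] [CommRing S] [IsDomain S] (f : R →+* S) {a : R}
    (ha : a ≠ 0) (hfa : f a = 0) : ∃ q, Prime q ∧ q ∣ a ∧ f q = 0 := by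
  induction a using UniqueFactorizationMonoid.induction_on_prime with
  | h₁ => exact absurd rfl ha
  | h₂ u hu => exact absurd hfa (hu.map f).ne_zero
  | h₃ a q ha₀ hq ih =>
    rcases mul_eq_zero.mp (hfa.symm ▸ (map_mul f q a).symm) with hq0 | ha0
    · exact ⟨q, hq, dvd_mul_right q a, hq0⟩
    · obtain ⟨r, hr, hra, hr0⟩ := ih ha₀ ha0
      exact ⟨r, hr, hra.mul_left q, hr0⟩

namespace MvPolynomial

theorem irreducible_X_add_C_mul_X {σ R : Type*} [CommRing R] [IsDomain R] {i j : σ}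
    (hij : i ≠ j) (c : R) : Irreducible (X i + C c * X j : MvPolynomial σ R) := by
  classical
  have hcoeff : (X i + C c * X j : MvPolynomial σ R).coeff (Finsupp.single i 1) = 1 := by
    simp [coeff_X, coeff_C_mul, Finsupp.single_left_inj one_ne_zero, hij.symm]
  apply irreducible_of_totalDegree_eq_one
  · apply le_antisymm
    · refine (totalDegree_add _ _).trans (max_le (totalDegree_X i).le ?_)
      exact (totalDegree_mul _ _).trans (by simp)
    · simpa using le_totalDegree (s := Finsupp.single i 1) (by simp [mem_support_iff, hcoeff])
  · exact fun r hr => isUnit_of_dvd_one (hcoeff ▸ hr _)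

theorem zeroSet_ne_univ {σ R : Type*} [CommRing R] [IsDomain R] [Infinite R]
    {p : MvPolynomial σ R} (hp : p ≠ 0) : {x : σ → R | eval x p = 0} ≠ Set.univ := by
  intro h
  refine hp (funext fun x => ?_)
  have hx : x ∈ {x : σ → R | eval x p = 0} := h ▸ Set.mem_univ x
  simpa using hx

section Nullstellensatz

variable {σ K : Type*} [Field K] [IsAlgClosed K] [Finite σ]

theorem exists_dvd_pow_of_zeroSet_subset {p q : MvPolynomial σ K}
    (h : {x | eval x p = 0} ⊆ {x | eval x q = 0}) : ∃ N, p ∣ q ^ N := by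
  have hq : q ∈ (Ideal.span {p}).radical := by
    rw [← vanishingIdeal_zeroLocus_eq_radical (K := K), mem_vanishingIdeal_iff, zeroLocus_span]
    simpa using h
  obtain ⟨N, hN⟩ := hq
  exact ⟨N, Ideal.mem_span_singleton.mp hN⟩

theorem zeroSet_eq_iUnion_of_subset_iUnion {ι : Type*} [Fintype ι] {p : MvPolynomial σ K}
    (hp : p ≠ 0) {ℓ : ι → MvPolynomial σ K} (hℓ : ∀ i, Prime (ℓ i))
    (hcover : {x | eval x p = 0} ⊆ ⋃ i, {x | eval x (ℓ i) = 0}) :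
    {x | eval x p = 0} = ⋃ i : {i // ℓ i ∣ p}, {x | eval x (ℓ i) = 0} := by
  obtain ⟨N, hN⟩ : ∃ N, p ∣ (∏ i, ℓ i) ^ N := by
    refine exists_dvd_pow_of_zeroSet_subset fun x hx => ?_
    obtain ⟨i, hi⟩ := Set.mem_iUnion.mp (hcover hx)
    exact (map_prod (eval x) _ _).trans (Finset.prod_eq_zero (Finset.mem_univ i) hi)
  refine subset_antisymm (fun x hx => ?_) (Set.iUnion_subset fun i x hx => ?_)
  · obtain ⟨q, hq, hqp, hqx⟩ := UniqueFactorizationMonoid.exists_prime_dvd_of_map_eq_zero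
      (eval x) hp hx
    obtain ⟨i, -, hqi⟩ := hq.exists_mem_finset_dvd (hq.dvd_of_dvd_pow (hqp.trans hN))
    have hassoc : Associated q (ℓ i) := hq.associated_of_dvd (hℓ i) hqi
    exact Set.mem_iUnion.mpr ⟨⟨i, hassoc.symm.dvd.trans hqp⟩,
      zero_dvd_iff.mp (hqx ▸ map_dvd (eval x) hqi)⟩
  · exact zero_dvd_iff.mp ((hx : eval x (ℓ i) = 0) ▸ map_dvd (eval x) i.2)

end Nullstellensatz

end MvPolynomial

open MvPolynomial

theorem IsAllowableHyperplane.exists_prime {n : ℕ} {H : Set (Fin n → ℂ)}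
    (hH : IsAllowableHyperplane n H) :
    ∃ ℓ : MvPolynomial (Fin n) ℂ, Prime ℓ ∧ H = {x | eval x ℓ = 0} := by
  rcases hH with ⟨i, rfl⟩ | ⟨i, j, hij, rfl⟩ | ⟨i, j, hij, rfl⟩
  · exact ⟨X i, X_prime, by simp⟩
  · exact ⟨X i + C 1 * X j, (irreducible_X_add_C_mul_X hij 1).prime, by simp⟩
  · exact ⟨X i + C (-1) * X j, (irreducible_X_add_C_mul_X hij (-1)).prime, by
      simp [sub_eq_add_neg]⟩

theorem stmt_2_general (n : ℕ) (p : MvPolynomial (Fin n) ℂ)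
    (hp : 0 < p.totalDegree)
    (hV : IsAllowable n {x | MvPolynomial.eval x p = 0}) :
    ∃ (s : ℕ) (H : Fin s → Set (Fin n → ℂ)),
      (∀ r, IsAllowableHyperplane n (H r)) ∧
      {x | MvPolynomial.eval x p = 0} = ⋃ r, H r := by
  have hp0 : p ≠ 0 := by rintro rfl; simp at hp
  obtain ⟨k, m, H, hH, hVeq⟩ := hV
  choose ℓ hℓ hHℓ using fun t : Σ i, Fin (m i) => (hH t.1 t.2).exists_prime
  have hcover : {x | eval x p = 0} ⊆ ⋃ t, {x | eval x (ℓ t) = 0} := by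
    have := hVeq.le.trans (Set.iUnion_iInter_subset_iUnion_sigma (hVeq ▸ zeroSet_ne_univ hp0))
    simpa only [hHℓ] using this
  rw [zeroSet_eq_iUnion_of_subset_iUnion hp0 hℓ hcover]
  exact Set.exists_fin_iUnion_eq fun t => hHℓ t.1 ▸ hH _ _

/-- The allowable variety of a nonconstant complex polynomial is a
finite union of allowable hyperplanes. -/
theorem stmt_2 (n : ℕ) (hn : 1 ≤ n) (p : MvPolynomial (Fin n) ℂ)
    (hp : 0 < p.totalDegree)
    (hV : IsAllowable n {x | MvPolynomial.eval x p = 0}) :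
    ∃ (s : ℕ) (H : Fin s → Set (Fin n → ℂ)),
      (∀ r, IsAllowableHyperplane n (H r)) ∧
      {x | MvPolynomial.eval x p = 0} = ⋃ r, H r :=
  stmt_2_general n p hp hV
end

section
/- Let n ≥ 1 and let p ∈ ℂ[x₁,…,xₙ] be a nonconstant polynomial whose zero set V(p) is allowable. Then p factors as p = c · ∏_j p_j, where c is a nonzero complex constant and each p_j is a power of one of the linear forms x_i, x_i − x_j, or x_i + x_j. -/
theorem UniqueFactorizationMonoid.exists_associated_list_prod {α : Type*}
    [CommMonoidWithZero α] [UniqueFactorizationMonoid α] {P : α → Prop} {p : α} (hp : p ≠ 0)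
    (h : ∀ a, Prime a → a ∣ p → ∃ b, P b ∧ Associated a b) :
    ∃ l : List α, (∀ b ∈ l, P b) ∧ Associated l.prod p := by
  induction p using UniqueFactorizationMonoid.induction_on_prime with
  | h₁ => exact absurd rfl hp
  | h₂ u hu => exact ⟨[], by simp, (associated_one_iff_isUnit.mpr hu).symm⟩
  | h₃ a q ha hq ih =>
    obtain ⟨l, hl, hla⟩ := ih ha fun b hb hba => h b hb (dvd_mul_of_dvd_right hba q)
    obtain ⟨b, hPb, hqb⟩ := h q hq (dvd_mul_right q a)
    exact ⟨b :: l, by simpa using ⟨hPb, hl⟩, by simpa using hqb.symm.mul_mul hla⟩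

open MvPolynomial

section

variable {σ K : Type*} [Field K]

theorem MvPolynomial.irreducible_of_totalDegree_eq_one_of_field {p : MvPolynomial σ K}
    (hp : p.totalDegree = 1) : Irreducible p := by
  refine irreducible_of_totalDegree_eq_one hp fun x hx => isUnit_iff_ne_zero.mpr ?_
  rintro rfl
  have : p = 0 := by ext m; simpa using hx m
  simp [this] at hp

theorem MvPolynomial.totalDegree_X_add_C_mul_X {i j : σ} (hij : i ≠ j) (c : K) :
    (X i + C c * X j : MvPolynomial σ K).totalDegree = 1 := by
  classical
  apply le_antisymm
  · refine (totalDegree_add _ _).trans (max_le (totalDegree_X i).le ?_)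
    exact (totalDegree_mul _ _).trans (by simp [totalDegree_X])
  · have : Finsupp.single i 1 ∈ (X i + C c * X j : MvPolynomial σ K).support := by
      simp [coeff_X, Finsupp.single_left_inj, hij.symm]
    simpa using le_totalDegree this

theorem MvPolynomial.prime_X_add_C_mul_X {i j : σ} (hij : i ≠ j) (c : K) :
    Prime (X i + C c * X j : MvPolynomial σ K) :=
  UniqueFactorizationMonoid.irreducible_iff_prime.mp <|
    irreducible_of_totalDegree_eq_one_of_field (totalDegree_X_add_C_mul_X hij c)

def IsAllowableForm {R : Type*} [CommRing R] (ℓ : MvPolynomial σ R) : Prop :=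
  (∃ i, ℓ = X i) ∨ (∃ i j, i ≠ j ∧ ℓ = X i - X j) ∨ (∃ i j, i ≠ j ∧ ℓ = X i + X j)

theorem IsAllowableForm.prime {ℓ : MvPolynomial σ K} (hℓ : IsAllowableForm ℓ) : Prime ℓ := by
  obtain ⟨i, rfl⟩ | ⟨i, j, hij, rfl⟩ | ⟨i, j, hij, rfl⟩ := hℓ
  · exact X_prime
  · simpa [sub_eq_add_neg] using prime_X_add_C_mul_X hij (-1 : K)
  · simpa using prime_X_add_C_mul_X hij (1 : K)

theorem MvPolynomial.exists_dvd_pow_of_vanishing [IsAlgClosed K] [Finite σ]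
    {p q : MvPolynomial σ K} (h : ∀ x, eval x p = 0 → eval x q = 0) : ∃ N, p ∣ q ^ N := by
  have hq : q ∈ vanishingIdeal K (zeroLocus K (Ideal.span {p})) := by
    rw [mem_vanishingIdeal_iff]
    intro x hx
    simpa [coe_aeval_eq_eval] using
      h x (by simpa [coe_aeval_eq_eval] using (mem_zeroLocus_iff.mp hx) p (Ideal.subset_span rfl))
  simpa [Ideal.mem_radical_iff, Ideal.mem_span_singleton] using hq

end

theorem IsAllowableHyperplane.exists_eq_zeroSet {n : ℕ} {H : Set (Fin n → ℂ)}
    (hH : IsAllowableHyperplane n H) :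
    ∃ ℓ : MvPolynomial (Fin n) ℂ, IsAllowableForm ℓ ∧ H = {x | eval x ℓ = 0} := by
  obtain ⟨i, rfl⟩ | ⟨i, j, hij, rfl⟩ | ⟨i, j, hij, rfl⟩ := hH
  · exact ⟨X i, Or.inl ⟨i, rfl⟩, by simp⟩
  · exact ⟨X i + X j, Or.inr (Or.inr ⟨i, j, hij, rfl⟩), by simp⟩
  · exact ⟨X i - X j, Or.inr (Or.inl ⟨i, j, hij, rfl⟩), by simp⟩

theorem IsAllowable.exists_prod_forms_vanishing {n : ℕ} {A : Set (Fin n → ℂ)}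
    (hA : IsAllowable n A) (hA_ne : A ≠ Set.univ) :
    ∃ (k : ℕ) (ℓ : Fin k → MvPolynomial (Fin n) ℂ),
      (∀ i, IsAllowableForm (ℓ i)) ∧ ∀ x ∈ A, eval x (∏ i, ℓ i) = 0 := by
  obtain ⟨k, m, H, hH, rfl⟩ := hA
  have hm : ∀ i, 0 < m i := fun i => Nat.pos_of_ne_zero fun hmi =>
    hA_ne (Set.eq_univ_of_forall fun x =>
      Set.mem_iUnion.mpr ⟨i, Set.mem_iInter.mpr fun j => (Fin.cast hmi j).elim0⟩)
  choose ℓ hℓ hHℓ using fun i => (hH i ⟨0, hm i⟩).exists_eq_zeroSet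
  refine ⟨k, ℓ, hℓ, fun x hx => ?_⟩
  obtain ⟨i, hxi⟩ := Set.mem_iUnion.mp hx
  have hx0 : x ∈ H i ⟨0, hm i⟩ := Set.mem_iInter.mp hxi _
  rw [hHℓ] at hx0
  rw [map_prod]
  exact Finset.prod_eq_zero (Finset.mem_univ i) hx0

theorem stmt_3_general (n : ℕ) (p : MvPolynomial (Fin n) ℂ)
    (hp : 0 < p.totalDegree)
    (hV : IsAllowable n {x | MvPolynomial.eval x p = 0}) :
    ∃ c : ℂ, c ≠ 0 ∧ ∃ (r : ℕ) (f : Fin r → MvPolynomial (Fin n) ℂ),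
      (∀ t, ∃ k : ℕ,
        (∃ i, f t = MvPolynomial.X i ^ k) ∨
        (∃ i j, i ≠ j ∧ f t = (MvPolynomial.X i - MvPolynomial.X j) ^ k) ∨
        (∃ i j, i ≠ j ∧ f t = (MvPolynomial.X i + MvPolynomial.X j) ^ k)) ∧
      p = MvPolynomial.C c * ∏ t, f t := by
  have hp0 : p ≠ 0 := by rintro rfl; simp at hp
  have hV_ne : {x | eval x p = 0} ≠ Set.univ := fun h =>
    hp0 (MvPolynomial.funext fun x => by simpa using h.ge (Set.mem_univ x))
  obtain ⟨k, ℓ, hℓ, hvan⟩ := hV.exists_prod_forms_vanishing hV_ne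
  obtain ⟨N, hN⟩ := exists_dvd_pow_of_vanishing hvan
  obtain ⟨l, hl, u, hu⟩ := UniqueFactorizationMonoid.exists_associated_list_prod hp0
    fun a ha hap => by
      obtain ⟨i, -, hai⟩ := ha.exists_mem_finset_dvd (ha.dvd_of_dvd_pow (hap.trans hN))
      exact ⟨ℓ i, hℓ i, ha.irreducible.associated_of_dvd (hℓ i).prime.irreducible hai⟩
  obtain ⟨c, hc, hcu⟩ := isUnit_iff_eq_C_of_isReduced.mp u.isUnit
  refine ⟨c, hc.ne_zero, l.length, fun t => l[t], fun t => ⟨1, ?_⟩, ?_⟩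
  · obtain ⟨i, h⟩ | ⟨i, j, hij, h⟩ | ⟨i, j, hij, h⟩ := hl _ (l.getElem_mem t.2)
    exacts [Or.inl ⟨i, by simp [h]⟩, Or.inr (Or.inl ⟨i, j, hij, by simp [h]⟩),
      Or.inr (Or.inr ⟨i, j, hij, by simp [h]⟩)]
  · rw [← hu, hcu, mul_comm, ← Fin.prod_univ_getElem]
    rfl

/-- A nonconstant complex polynomial with allowable variety factors as a
constant times a product of powers of `x_i`, `x_i - x_j`, `x_i + x_j`. -/
theorem stmt_3 (n : ℕ) (hn : 1 ≤ n) (p : MvPolynomial (Fin n) ℂ)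
    (hp : 0 < p.totalDegree)
    (hV : IsAllowable n {x | MvPolynomial.eval x p = 0}) :
    ∃ c : ℂ, c ≠ 0 ∧ ∃ (r : ℕ) (f : Fin r → MvPolynomial (Fin n) ℂ),
      (∀ t, ∃ k : ℕ,
        (∃ i, f t = MvPolynomial.X i ^ k) ∨
        (∃ i j, i ≠ j ∧ f t = (MvPolynomial.X i - MvPolynomial.X j) ^ k) ∨
        (∃ i j, i ≠ j ∧ f t = (MvPolynomial.X i + MvPolynomial.X j) ^ k)) ∧
      p = MvPolynomial.C c * ∏ t, f t :=
  stmt_3_general n p hp hV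
end

section
/- Let n ≥ 1 and let p ∈ ℂ[x₁,…,xₙ] be a nonconstant polynomial whose zero set V(p) is allowable. Then p is homogeneous. -/
/-!
The zero set of `p` is a finite union of linear subspaces, each cut out by equations
`xᵢ = 0`, `xᵢ ± xⱼ = 0`. Choosing one such linear form on each subspace, their product `g` is
homogeneous and vanishes on `V(p)`, so by the Nullstellensatz `p ∣ g ^ N`. A factor of a nonzero
homogeneous polynomial is homogeneous: the lowest and the highest degree of its monomials are
both additive under multiplication, and they agree for the product.
-/

open MvPolynomial

namespace MvPolynomial

variable {σ R : Type*} [CommSemiring R] {φ ψ : MvPolynomial σ R}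

theorem order_coe_le_degree {d : σ →₀ ℕ} (hd : d ∈ φ.support) :
    (φ : MvPowerSeries σ R).order ≤ d.degree :=
  MvPowerSeries.order_le (by rwa [coeff_coe, ← mem_support_iff])

theorem order_coe_le_totalDegree (h : φ ≠ 0) :
    (φ : MvPowerSeries σ R).order ≤ φ.totalDegree := by
  obtain ⟨d, hd⟩ := support_nonempty.2 h
  exact (order_coe_le_degree hd).trans (by exact_mod_cast le_totalDegree hd)

theorem isHomogeneous_of_totalDegree_le_order
    (h : (φ.totalDegree : ℕ∞) ≤ (φ : MvPowerSeries σ R).order) :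
    φ.IsHomogeneous φ.totalDegree := by
  intro d hd
  have hdeg : d.degree = φ.totalDegree := le_antisymm (le_totalDegree (mem_support_iff.2 hd))
    (by exact_mod_cast h.trans (order_coe_le_degree (mem_support_iff.2 hd)))
  rwa [Finsupp.degree_eq_weight_one] at hdeg

theorem IsHomogeneous.le_order_coe {n : ℕ} (h : φ.IsHomogeneous n) :
    (n : ℕ∞) ≤ (φ : MvPowerSeries σ R).order :=
  MvPowerSeries.nat_le_order fun d hd => by
    rw [coeff_coe]
    exact h.coeff_eq_zero hd.ne

theorem IsHomogeneous.of_dvd [NoZeroDivisors R] {n : ℕ} (hψ : ψ.IsHomogeneous n)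
    (hψ0 : ψ ≠ 0) (h : φ ∣ ψ) : φ.IsHomogeneous φ.totalDegree := by
  obtain ⟨χ, rfl⟩ := h
  have hφ0 := left_ne_zero_of_mul hψ0
  have hχ0 := right_ne_zero_of_mul hψ0
  apply isHomogeneous_of_totalDegree_le_order
  have hsum : (φ.totalDegree + χ.totalDegree : ℕ∞) ≤
      (φ : MvPowerSeries σ R).order + (χ : MvPowerSeries σ R).order := by
    rw [← MvPowerSeries.order_mul, ← coe_mul]
    calc (φ.totalDegree + χ.totalDegree : ℕ∞) = n := by
          rw [← hψ.totalDegree hψ0, totalDegree_mul_of_isDomain hφ0 hχ0]; push_cast; rfl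
      _ ≤ _ := hψ.le_order_coe
  exact (ENat.add_le_add_iff_right (ENat.natCast_ne_top _)).1
    (hsum.trans (add_le_add_right (order_coe_le_totalDegree hχ0) _))

theorem exists_dvd_pow_of_eval_eq_zero {k : Type*} [Field k] [IsAlgClosed k] [Finite σ]
    {p g : MvPolynomial σ k} (h : ∀ x, eval x p = 0 → eval x g = 0) : ∃ N, p ∣ g ^ N := by
  have hg : g ∈ vanishingIdeal k (zeroLocus k (Ideal.span {p})) := by
    rw [mem_vanishingIdeal_iff]
    intro x hx
    rw [zeroLocus_span] at hx
    simpa using h x (by simpa using hx p rfl)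
  rw [vanishingIdeal_zeroLocus_eq_radical] at hg
  obtain ⟨N, hN⟩ := hg
  exact ⟨N, Ideal.mem_span_singleton.1 hN⟩

end MvPolynomial

theorem IsAllowableHyperplane.exists_isHomogeneous_one {n : ℕ} {H : Set (Fin n → ℂ)}
    (h : IsAllowableHyperplane n H) :
    ∃ L : MvPolynomial (Fin n) ℂ, L.IsHomogeneous 1 ∧ L ≠ 0 ∧ H = {x | eval x L = 0} := by
  rcases h with ⟨i, rfl⟩ | ⟨i, j, hij, rfl⟩ | ⟨i, j, hij, rfl⟩
  · exact ⟨X i, isHomogeneous_X _ _, X_ne_zero i, by simp⟩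
  · refine ⟨X i + X j, (isHomogeneous_X _ _).add (isHomogeneous_X _ _), fun h0 => ?_, by simp⟩
    simpa using congrArg (eval 1) h0
  · refine ⟨X i - X j, (isHomogeneous_X _ _).sub (isHomogeneous_X _ _), fun h0 => ?_, by simp⟩
    simpa [Pi.single_eq_of_ne hij.symm] using congrArg (eval (Pi.single i 1)) h0

theorem IsAllowable.exists_isHomogeneous_vanishing {n : ℕ} {A : Set (Fin n → ℂ)}
    (hA : IsAllowable n A) (hA_ne : A ≠ Set.univ) :
    ∃ (g : MvPolynomial (Fin n) ℂ) (e : ℕ),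
      g.IsHomogeneous e ∧ g ≠ 0 ∧ ∀ x ∈ A, eval x g = 0 := by
  obtain ⟨k, m, H, hH, rfl⟩ := hA
  have hm : ∀ i, 0 < m i := fun i => Nat.pos_of_ne_zero fun h0 => hA_ne <|
    Set.eq_univ_of_forall fun x =>
      Set.mem_iUnion.2 ⟨i, Set.mem_iInter.2 fun j => absurd j.2 (by omega)⟩
  choose L hL_hom hL_ne hL_eq using fun i => (hH i ⟨0, hm i⟩).exists_isHomogeneous_one
  refine ⟨∏ i, L i, ∑ _ : Fin k, 1, IsHomogeneous.prod _ _ _ fun i _ => hL_hom i,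
    Finset.prod_ne_zero_iff.2 fun i _ => hL_ne i, fun x hx => ?_⟩
  obtain ⟨i, hi⟩ := Set.mem_iUnion.1 hx
  have hxi : x ∈ H i ⟨0, hm i⟩ := Set.mem_iInter.1 hi _
  rw [hL_eq i] at hxi
  rw [map_prod]
  exact Finset.prod_eq_zero (Finset.mem_univ i) hxi

theorem stmt_5_general (n : ℕ) (p : MvPolynomial (Fin n) ℂ)
    (hp : 0 < p.totalDegree)
    (hV : IsAllowable n {x | MvPolynomial.eval x p = 0}) :
    ∃ d : ℕ, p.IsHomogeneous d := by
  have hp0 : p ≠ 0 := by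
    rintro rfl
    simp at hp
  have hV_ne : {x | eval x p = 0} ≠ Set.univ := fun h =>
    hp0 <| MvPolynomial.funext fun x => by simpa using h.ge (Set.mem_univ x)
  obtain ⟨g, e, hg, hg0, hgV⟩ := hV.exists_isHomogeneous_vanishing hV_ne
  obtain ⟨N, hN⟩ := exists_dvd_pow_of_eval_eq_zero hgV
  exact ⟨_, (hg.pow N).of_dvd (pow_ne_zero N hg0) hN⟩

/-- A nonconstant complex polynomial with allowable variety is homogeneous. -/
theorem stmt_5 (n : ℕ) (hn : 1 ≤ n) (p : MvPolynomial (Fin n) ℂ)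
    (hp : 0 < p.totalDegree)
    (hV : IsAllowable n {x | MvPolynomial.eval x p = 0}) :
    ∃ d : ℕ, p.IsHomogeneous d :=
  stmt_5_general n p hp hV
end

section
/- Let p ∈ ℝ[x₁,…,xₙ] be an irreducible polynomial whose real zero set V_ℝ(p) = {x ∈ ℝⁿ : p(x) = 0} is allowable. Then either p is a constant multiple of one of the linear forms x_i, x_i + x_j, x_i − x_j, or p does not change sign on ℝⁿ, i.e., p(x) ≥ 0 for all x ∈ ℝⁿ or p(x) ≤ 0 for all x ∈ ℝⁿ. -/
open MvPolynomial Metric Set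




/-- A linear form of one of the three allowable shapes. -/
def IsLinForm (n : ℕ) (L : MvPolynomial (Fin n) ℝ) : Prop :=
  (∃ i, L = X i) ∨ (∃ i j, i ≠ j ∧ L = X i + X j) ∨ (∃ i j, i ≠ j ∧ L = X i - X j)

lemma evalAffine {n : ℕ} {L : MvPolynomial (Fin n) ℝ} (h : IsLinForm n L) (u v : Fin n → ℝ) (t : ℝ) :
    eval (fun j => u j + t * (v j - u j)) L = eval u L + t * (eval v L - eval u L) := by
  rcases h with ⟨i, rfl⟩ | ⟨i, j, hij, rfl⟩ | ⟨i, j, hij, rfl⟩ <;> simp <;> ring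

lemma perturbForm {n : ℕ} {L : MvPolynomial (Fin n) ℝ} (h : IsLinForm n L) :
    ∃ i₀ : Fin n, ∀ (x : Fin n → ℝ) (ε : ℝ),
      eval (Function.update x i₀ (x i₀ + ε)) L = eval x L + ε := by
  rcases h with ⟨i, rfl⟩ | ⟨i, j, hij, rfl⟩ | ⟨i, j, hij, rfl⟩
  · exact ⟨i, fun x ε => by simp⟩
  · exact ⟨i, fun x ε => by
      simp [Function.update_of_ne hij.symm]; ring⟩
  · exact ⟨i, fun x ε => by
      simp [Function.update_of_ne hij.symm]; ring⟩

lemma denseNeForm {n : ℕ} {L : MvPolynomial (Fin n) ℝ} (h : IsLinForm n L) (β : ℝ) :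
    Dense {x : Fin n → ℝ | eval x L ≠ β} := by
  obtain ⟨i₀, hi₀⟩ := perturbForm h
  rw [Metric.dense_iff]
  intro x r hr
  by_cases hx : eval x L = β
  · refine ⟨Function.update x i₀ (x i₀ + r / 2), ?_, ?_⟩
    · rw [mem_ball, dist_pi_lt_iff hr]
      intro j
      by_cases hj : j = i₀
      · subst hj; simp [Real.dist_eq]
        rw [abs_of_nonneg (by linarith)]; linarith
      · simp [Function.update_of_ne hj, hr]
    · simp only [mem_setOf_eq, hi₀, hx]
      intro hcon
      have : r / 2 = 0 := by linarith
      linarith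
  · exact ⟨x, mem_ball_self hr, hx⟩


lemma isUnit_eq_C : ∀ {N : ℕ} (q : MvPolynomial (Fin N) ℝ), IsUnit q → ∃ c : ℝ, q = C c := by
  intro N
  induction N with
  | zero => intro q _; exact ⟨q.coeff 0, (eq_C_of_isEmpty q)⟩
  | succ N ih =>
    intro q hq
    have h2 : IsUnit (finSuccEquiv ℝ N q) := hq.map _
    obtain ⟨r, hr, hCr⟩ := Polynomial.isUnit_iff.mp h2
    obtain ⟨c, rfl⟩ := ih r hr
    refine ⟨c, (finSuccEquiv ℝ N).injective ?_⟩
    rw [← hCr]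
    simp [finSuccEquiv_apply]



lemma sub_dvd_aeval {n : ℕ} (i : Fin n) (g : MvPolynomial (Fin n) ℝ) (p : MvPolynomial (Fin n) ℝ) :
    (X i - g) ∣ (p - aeval (Function.update X i g) p) := by
  induction p using MvPolynomial.induction_on with
  | C a => simp [aeval_C, algebraMap_eq]
  | add p q hp hq =>
    have : p + q - aeval (Function.update X i g) (p + q)
        = (p - aeval (Function.update X i g) p) + (q - aeval (Function.update X i g) q) := by
      rw [map_add]; ring
    rw [this]; exact dvd_add hp hq
  | mul_X p j hp =>
    have : p * X j - aeval (Function.update X i g) (p * X j)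
        = (p - aeval (Function.update X i g) p) * X j
          + aeval (Function.update X i g) p * (X j - Function.update X i g j) := by
      rw [map_mul, aeval_X]; ring
    rw [this]
    refine dvd_add (Dvd.dvd.mul_right hp _) (Dvd.dvd.mul_left ?_ _)
    by_cases hj : j = i
    · subst hj; simp [Function.update_self]
    · simp [Function.update_of_ne hj]

lemma eval_aeval' {n : ℕ} (y : Fin n → ℝ) (f : Fin n → MvPolynomial (Fin n) ℝ)
    (p : MvPolynomial (Fin n) ℝ) :
    eval y (aeval f p) = eval (fun j => eval y (f j)) p := by
  induction p using MvPolynomial.induction_on with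
  | C a => simp [aeval_C, algebraMap_eq]
  | add p q hp hq => simp only [map_add, hp, hq]
  | mul_X p j hp => simp only [map_mul, aeval_X, eval_X, hp]

lemma dvd_of_vanish {n : ℕ} (i : Fin n) (g : MvPolynomial (Fin n) ℝ)
    (hg : ∀ (y : Fin n → ℝ) (v : ℝ), eval (Function.update y i v) g = eval y g)
    (p : MvPolynomial (Fin n) ℝ)
    (hvan : ∀ x : Fin n → ℝ, x i = eval x g → eval x p = 0) :
    (X i - g) ∣ p := by
  have hr : aeval (Function.update X i g) p = 0 := by
    apply MvPolynomial.funext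
    intro y
    rw [eval_aeval']
    have hz : (fun j => eval y (Function.update X i g j)) = Function.update y i (eval y g) := by
      funext j
      by_cases hj : j = i
      · subst hj; simp
      · simp [Function.update_of_ne hj]
    rw [hz, map_zero]
    apply hvan
    rw [Function.update_self, hg]
  have := sub_dvd_aeval i g p
  rwa [hr, sub_zero] at this

lemma line_poly {n : ℕ} (P : MvPolynomial (Fin n) ℝ) (c v : Fin n → ℝ) :
    ∃ f : Polynomial ℝ, ∀ t : ℝ, f.eval t = eval (fun j => c j + t * v j) P := by
  refine ⟨aeval (fun j => Polynomial.C (c j) + Polynomial.X * Polynomial.C (v j)) P, fun t => ?_⟩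
  induction P using MvPolynomial.induction_on with
  | C a => simp [aeval_C, algebraMap_eq]
  | add p q hp hq => simp only [map_add, Polynomial.eval_add, hp, hq]
  | mul_X p j hp =>
    simp only [map_mul, aeval_X, eval_X, Polynomial.eval_mul, Polynomial.eval_add,
      Polynomial.eval_C, Polynomial.eval_X, hp]




lemma zero_of_ball {n : ℕ} (P : MvPolynomial (Fin n) ℝ) (c : Fin n → ℝ) (ε : ℝ) (hε : 0 < ε)
    (h : ∀ u ∈ ball c ε, eval u P = 0) (y : Fin n → ℝ) : eval y P = 0 := by
  obtain ⟨f, hf⟩ := line_poly P c (fun j => y j - c j)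
  set S : ℝ := 1 + ∑ j : Fin n, |y j - c j| with hS
  have hS0 : 0 < S := by positivity
  set δ : ℝ := ε / S with hδ
  have hδ0 : 0 < δ := by positivity
  have hroot : ∀ t ∈ Ioo (0:ℝ) δ, f.eval t = 0 := by
    intro t ht
    rw [hf]
    apply h
    rw [mem_ball, dist_pi_lt_iff hε]
    intro j
    have h1 : |y j - c j| ≤ S := by
      rw [hS]
      have : |y j - c j| ≤ ∑ j : Fin n, |y j - c j| :=
        Finset.single_le_sum (f := fun j => |y j - c j|) (fun _ _ => abs_nonneg _)
          (Finset.mem_univ j)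
      linarith
    have he : c j + t * (y j - c j) - c j = t * (y j - c j) := by ring
    rw [Real.dist_eq, he, abs_mul, abs_of_pos ht.1]
    calc t * |y j - c j| ≤ t * S := by
          apply mul_le_mul_of_nonneg_left h1 ht.1.le
      _ < δ * S := by
          apply mul_lt_mul_of_pos_right ht.2 hS0
      _ = ε := by rw [hδ]; field_simp
  have hf0 : f = 0 := by
    apply Polynomial.eq_zero_of_infinite_isRoot
    exact Set.Infinite.mono (fun t ht => hroot t ht) (Set.Ioo_infinite hδ0)
  have := hf 1
  rw [hf0] at this
  simp only [Polynomial.eval_zero] at this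
  have hy : (fun j => c j + 1 * (y j - c j)) = y := by funext j; ring
  rw [hy] at this
  exact this.symm

lemma clear_denoms {n : ℕ} (L : MvPolynomial (Fin n) ℝ) (b : Fin n → ℝ) (β : ℝ) (hβ : β = eval b L)
    (p : MvPolynomial (Fin n) ℝ) :
    ∃ (P : MvPolynomial (Fin n) ℝ) (N : ℕ), ∀ u : Fin n → ℝ, eval u L - β ≠ 0 →
      eval u P = (eval u L - β) ^ N *
        eval (fun j => u j + (eval u L / (eval u L - β)) * (b j - u j)) p := by
  induction p using MvPolynomial.induction_on with
  | C a => exact ⟨C a, 0, by simp⟩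
  | add p q hp hq =>
    obtain ⟨P, N, hP⟩ := hp
    obtain ⟨Q, M, hQ⟩ := hq
    refine ⟨P * (L - C β) ^ M + Q * (L - C β) ^ N, N + M, fun u hu => ?_⟩
    have h1 := hP u hu
    have h2 := hQ u hu
    simp only [map_add, map_mul, map_pow, map_sub, eval_C, h1, h2]
    ring
  | mul_X p j hp =>
    obtain ⟨P, N, hP⟩ := hp
    refine ⟨P * (C (-β) * X j + C (b j) * L), N + 1, fun u hu => ?_⟩
    have h1 := hP u hu
    simp only [map_add, map_mul, eval_C, eval_X, h1]
    have key : -β * u j + b j * eval u L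
        = (eval u L - β) * (u j + (eval u L / (eval u L - β)) * (b j - u j)) := by
      field_simp
      ring
    rw [key]
    ring


/-- An allowable hyperplane in `ℝⁿ`: one of `{x_i = 0}`, `{x_i + x_j = 0}`, `{x_i - x_j = 0}`. -/
def IsAllowableHyperplaneR (n : ℕ) (H : Set (Fin n → ℝ)) : Prop :=
  (∃ i : Fin n, H = {x | x i = 0}) ∨
  (∃ i j : Fin n, i ≠ j ∧ H = {x | x i + x j = 0}) ∨
  (∃ i j : Fin n, i ≠ j ∧ H = {x | x i - x j = 0})

/-- An allowable set: a finite union of finite intersections of allowable hyperplanes. -/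
def IsAllowableR (n : ℕ) (A : Set (Fin n → ℝ)) : Prop :=
  ∃ (k : ℕ) (m : Fin k → ℕ) (H : (i : Fin k) → Fin (m i) → Set (Fin n → ℝ)),
    (∀ i j, IsAllowableHyperplaneR n (H i j)) ∧ A = ⋃ i, ⋂ j, H i j

/-- An irreducible real polynomial with allowable real variety is either a
constant multiple of `x_i`, `x_i + x_j`, or `x_i - x_j`, or does not change sign on `ℝⁿ`. -/
theorem stmt_6 (n : ℕ) (hn : 1 ≤ n) (p : MvPolynomial (Fin n) ℝ)
    (hirr : Irreducible p)
    (hV : IsAllowableR n {x | MvPolynomial.eval x p = 0}) :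
    (∃ c : ℝ,
      (∃ i, p = MvPolynomial.C c * MvPolynomial.X i) ∨
      (∃ i j, i ≠ j ∧ p = MvPolynomial.C c * (MvPolynomial.X i + MvPolynomial.X j)) ∨
      (∃ i j, i ≠ j ∧ p = MvPolynomial.C c * (MvPolynomial.X i - MvPolynomial.X j))) ∨
    (∀ x, 0 ≤ MvPolynomial.eval x p) ∨ (∀ x, MvPolynomial.eval x p ≤ 0) := by
  by_cases hpos : ∀ x, 0 ≤ MvPolynomial.eval x p
  · exact Or.inr (Or.inl hpos)
  by_cases hneg : ∀ x, MvPolynomial.eval x p ≤ 0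
  · exact Or.inr (Or.inr hneg)
  push_neg at hpos hneg
  obtain ⟨a, ha⟩ := hpos   -- eval a p < 0
  obtain ⟨b0, hb0⟩ := hneg -- 0 < eval b0 p
  left
  obtain ⟨k, m, H, hH, hVeq⟩ := hV
  -- every intersection is nonempty-indexed
  have hm : ∀ i : Fin k, 0 < m i := by
    intro i
    rcases Nat.eq_zero_or_pos (m i) with h0 | h
    · exfalso
      have hb0mem : b0 ∈ {x | MvPolynomial.eval x p = 0} := by
        rw [hVeq]
        refine Set.mem_iUnion.mpr ⟨i, Set.mem_iInter.mpr fun j => ?_⟩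
        exact absurd j.2 (by omega)
      have : MvPolynomial.eval b0 p = 0 := hb0mem
      linarith
    · exact h
  -- extract a linear form from each piece
  have hforms : ∀ i : Fin k, ∃ L : MvPolynomial (Fin n) ℝ, IsLinForm n L ∧
      (⋂ j, H i j) ⊆ {x | eval x L = 0} := by
    intro i
    set j0 : Fin (m i) := ⟨0, hm i⟩ with hj0
    rcases hH i j0 with ⟨i1, hH1⟩ | ⟨i1, j1, hij, hH1⟩ | ⟨i1, j1, hij, hH1⟩
    · refine ⟨X i1, Or.inl ⟨i1, rfl⟩, fun x hx => ?_⟩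
      have := Set.mem_iInter.mp hx j0
      rw [hH1] at this
      simpa using this
    · refine ⟨X i1 + X j1, Or.inr (Or.inl ⟨i1, j1, hij, rfl⟩), fun x hx => ?_⟩
      have := Set.mem_iInter.mp hx j0
      rw [hH1] at this
      simpa using this
    · refine ⟨X i1 - X j1, Or.inr (Or.inr ⟨i1, j1, hij, rfl⟩), fun x hx => ?_⟩
      have := Set.mem_iInter.mp hx j0
      rw [hH1] at this
      simpa using this
  choose ℓ hℓform hℓsub using hforms
  have hcover : ∀ x : Fin n → ℝ, MvPolynomial.eval x p = 0 → ∃ i, eval x (ℓ i) = 0 := by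
    intro x hx
    have : x ∈ {x | MvPolynomial.eval x p = 0} := hx
    rw [hVeq] at this
    obtain ⟨i, hi⟩ := Set.mem_iUnion.mp this
    exact ⟨i, hℓsub i hi⟩
  -- choose a generic positive point b'
  have hcont : Continuous fun x : Fin n → ℝ => MvPolynomial.eval x p :=
    MvPolynomial.continuous_eval p
  have hdenseG : Dense {x : Fin n → ℝ | ∀ i, eval x (ℓ i) ≠ 0} := by
    have heq : {x : Fin n → ℝ | ∀ i, eval x (ℓ i) ≠ 0}
        = ⋂ i, {x : Fin n → ℝ | eval x (ℓ i) ≠ 0} := by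
      ext x; simp
    rw [heq]
    refine dense_iInter_of_isOpen (fun i => ?_) (fun i => denseNeForm (hℓform i) 0)
    exact isOpen_compl_singleton.preimage (MvPolynomial.continuous_eval (ℓ i))
  have hOpos : IsOpen {x : Fin n → ℝ | 0 < MvPolynomial.eval x p} :=
    isOpen_Ioi.preimage hcont
  obtain ⟨b', hb'pos, hb'ne⟩ :=
    hdenseG.inter_open_nonempty _ hOpos ⟨b0, hb0⟩
  -- a negative ball
  have hOneg : IsOpen {x : Fin n → ℝ | MvPolynomial.eval x p < 0} :=
    isOpen_Iio.preimage hcont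
  obtain ⟨ε, hε, hball⟩ := Metric.isOpen_iff.mp hOneg a ha
  -- notation
  set β : Fin k → ℝ := fun i => eval b' (ℓ i) with hβ
  have hβne : ∀ i, β i ≠ 0 := fun i => hb'ne i
  set w : Fin k → (Fin n → ℝ) → (Fin n → ℝ) := fun i u =>
    fun j => u j + (eval u (ℓ i) / (eval u (ℓ i) - β i)) * (b' j - u j) with hw
  -- key: every point of the negative ball projects to a zero of p
  have key : ∀ u ∈ ball a ε, ∃ i, MvPolynomial.eval (w i u) p = 0 := by
    intro u hu
    have hu0 : MvPolynomial.eval u p < 0 := hball hu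
    set f : ℝ → ℝ := fun t => MvPolynomial.eval (fun j => u j + t * (b' j - u j)) p with hf
    have hfc : Continuous f := by
      apply hcont.comp
      exact continuous_pi fun j => continuous_const.add (continuous_id.mul continuous_const)
    have hf0 : f 0 = MvPolynomial.eval u p := by
      simp [hf]
    have hf1 : f 1 = MvPolynomial.eval b' p := by
      have : (fun j => u j + 1 * (b' j - u j)) = b' := by funext j; ring
      simp [hf, this]
    have hIVT := intermediate_value_Icc (by norm_num : (0:ℝ) ≤ 1) hfc.continuousOn
    have h0mem : (0:ℝ) ∈ Icc (f 0) (f 1) := by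
      rw [hf0, hf1]
      exact ⟨hu0.le, (hb'pos).le⟩
    obtain ⟨t, ht01, hft⟩ := hIVT h0mem
    obtain ⟨i, hi⟩ := hcover _ hft
    have haff := evalAffine (hℓform i) u b' t
    rw [haff] at hi
    set α : ℝ := eval u (ℓ i) with hα
    have hαβ : α - β i ≠ 0 := by
      intro hcon
      have hab : α = β i := by linarith
      rw [hab] at hi
      have : β i = 0 := by linarith [hi]
      exact hβne i this
    have ht : t = α / (α - β i) := by
      field_simp
      linarith [hi]
    refine ⟨i, ?_⟩
    have hwz : w i u = fun j => u j + t * (b' j - u j) := by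
      funext j
      rw [hw]
      simp only
      rw [← hα, ← ht]
    rw [hwz]
    exact hft
  -- the closed sets for Baire
  set C : Fin k → Set (Fin n → ℝ) := fun i =>
    {u | eval u (ℓ i) - β i = 0 ∨ MvPolynomial.eval (w i u) p = 0} with hC
  have hCclosed : ∀ i, IsClosed (C i) := by
    intro i
    rw [← isOpen_compl_iff]
    have heq : (C i)ᶜ = {u : Fin n → ℝ | eval u (ℓ i) - β i ≠ 0}
        ∩ (fun u => MvPolynomial.eval (w i u) p) ⁻¹' ({0}ᶜ) := by
      ext u; simp [hC, not_or]
    rw [heq]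
    have hO : IsOpen {u : Fin n → ℝ | eval u (ℓ i) - β i ≠ 0} := by
      have : {u : Fin n → ℝ | eval u (ℓ i) - β i ≠ 0}
          = (fun u => eval u (ℓ i) - β i) ⁻¹' ({0}ᶜ) := by ext u; simp
      rw [this]
      exact isOpen_compl_singleton.preimage ((MvPolynomial.continuous_eval (ℓ i)).sub continuous_const)
    refine ContinuousOn.isOpen_inter_preimage ?_ hO isOpen_compl_singleton
    apply (MvPolynomial.continuous_eval p).comp_continuousOn
    apply continuousOn_pi.mpr
    intro j
    exact ((continuous_apply j).continuousOn).add
      ((((MvPolynomial.continuous_eval (ℓ i)).continuousOn).div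
        (((MvPolynomial.continuous_eval (ℓ i)).sub continuous_const).continuousOn)
        (fun x hx => hx)).mul ((continuous_const.sub (continuous_apply j)).continuousOn))
  -- Baire category
  set F : Option (Fin k) → Set (Fin n → ℝ) := fun o => o.elim (ball a ε)ᶜ C with hF
  have hFc : ∀ o, IsClosed (F o) := by
    intro o
    cases o with
    | none => exact isOpen_ball.isClosed_compl
    | some i => exact hCclosed i
  have hFU : (⋃ o, F o) = univ := by
    ext x
    simp only [Set.mem_iUnion, Set.mem_univ, iff_true]
    by_cases hx : x ∈ ball a ε
    · obtain ⟨i, hi⟩ := key x hx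
      exact ⟨some i, Or.inr hi⟩
    · exact ⟨none, hx⟩
  have hdint := dense_iUnion_interior_of_closed hFc hFU
  obtain ⟨x0, hx0ball, hx0int⟩ :=
    hdint.inter_open_nonempty _ isOpen_ball ⟨a, mem_ball_self hε⟩
  obtain ⟨o, hx0o⟩ := Set.mem_iUnion.mp hx0int
  cases o with
  | none =>
    exact absurd (interior_subset hx0o) (fun h => h hx0ball)
  | some i =>
    have hWopen : IsOpen (ball a ε ∩ interior (C i)) := isOpen_ball.inter isOpen_interior
    have hx0W : x0 ∈ ball a ε ∩ interior (C i) := ⟨hx0ball, hx0o⟩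
    obtain ⟨y, hyW, hyD⟩ :=
      (denseNeForm (hℓform i) (β i)).inter_open_nonempty _ hWopen ⟨x0, hx0W⟩
    have hyD' : IsOpen {u : Fin n → ℝ | eval u (ℓ i) ≠ β i} :=
      isOpen_compl_singleton.preimage (MvPolynomial.continuous_eval (ℓ i))
    obtain ⟨δ, hδ, hballδ⟩ := Metric.isOpen_iff.mp
      (hWopen.inter hyD') y ⟨hyW, hyD⟩
    obtain ⟨P, N, hP⟩ := clear_denoms (ℓ i) b' (β i) rfl p
    have hPzero : ∀ u ∈ ball y δ, MvPolynomial.eval u P = 0 := by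
      intro u hu
      obtain ⟨⟨huball, huint⟩, huD⟩ := hballδ hu
      have huD' : eval u (ℓ i) - β i ≠ 0 := sub_ne_zero_of_ne huD
      have huC : u ∈ C i := interior_subset huint
      rcases huC with h0 | h0
      · exact absurd h0 huD'
      · rw [hP u huD', h0, mul_zero]
    have hPall : ∀ x : Fin n → ℝ, MvPolynomial.eval x P = 0 :=
      zero_of_ball P y δ hδ hPzero
    have hvanH : ∀ x : Fin n → ℝ, eval x (ℓ i) = 0 → MvPolynomial.eval x p = 0 := by
      intro x hx
      have hD : eval x (ℓ i) - β i ≠ 0 := by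
        rw [hx, zero_sub]
        exact neg_ne_zero.mpr (hβne i)
      have h1 := hP x hD
      rw [hPall x] at h1
      have hwx : (fun j => x j + eval x (ℓ i) / (eval x (ℓ i) - β i) * (b' j - x j)) = x := by
        funext j
        rw [hx]
        simp
      rw [hwx] at h1
      exact (mul_eq_zero.mp h1.symm).resolve_left (pow_ne_zero N hD)
    rcases hℓform i with ⟨i1, hL⟩ | ⟨i1, j1, hij, hL⟩ | ⟨i1, j1, hij, hL⟩
    · have hdvd : X i1 ∣ p := by
        have := dvd_of_vanish i1 0 (by intro y v; simp) p ?_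
        · rwa [sub_zero] at this
        · intro x hx
          apply hvanH
          rw [hL, eval_X]
          simpa using hx
      obtain ⟨q, hq⟩ := hdvd
      rcases hirr.isUnit_or_isUnit hq with hu | hu
      · exfalso
        have := hu.map (eval (fun _ => (0:ℝ)))
        rw [eval_X] at this
        exact not_isUnit_zero this
      · obtain ⟨c, rfl⟩ := isUnit_eq_C q hu
        exact ⟨c, Or.inl ⟨i1, by rw [hq]; ring⟩⟩
    · have hdvd : (X i1 + X j1) ∣ p := by
        have := dvd_of_vanish i1 (-X j1)
          (by intro y v; simp [Function.update_of_ne hij.symm]) p ?_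
        · rwa [sub_neg_eq_add] at this
        · intro x hx
          apply hvanH
          rw [hL]
          simp only [eval_neg, eval_X] at hx
          simp [eval_add, eval_X, hx]
      obtain ⟨q, hq⟩ := hdvd
      rcases hirr.isUnit_or_isUnit hq with hu | hu
      · exfalso
        have := hu.map (eval (fun _ => (0:ℝ)))
        rw [map_add, eval_X, eval_X, add_zero] at this
        exact not_isUnit_zero this
      · obtain ⟨c, rfl⟩ := isUnit_eq_C q hu
        exact ⟨c, Or.inr (Or.inl ⟨i1, j1, hij, by rw [hq]; ring⟩)⟩
    · have hdvd : (X i1 - X j1) ∣ p := by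
        apply dvd_of_vanish i1 (X j1)
          (by intro y v; simp [Function.update_of_ne hij.symm]) p
        intro x hx
        apply hvanH
        rw [hL]
        simp only [eval_X] at hx
        simp [eval_sub, eval_X, hx]
      obtain ⟨q, hq⟩ := hdvd
      rcases hirr.isUnit_or_isUnit hq with hu | hu
      · exfalso
        have := hu.map (eval (fun _ => (0:ℝ)))
        rw [map_sub, eval_X, eval_X, sub_zero] at this
        exact not_isUnit_zero this
      · obtain ⟨c, rfl⟩ := isUnit_eq_C q hu
        exact ⟨c, Or.inr (Or.inr ⟨i1, j1, hij, by rw [hq]; ring⟩)⟩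
end

section
/- Let p, r ∈ ℝ[x₁,…,xₙ] and suppose p is homogeneous of degree d and there exists M ≥ 0 such that |r(x)| ≤ M·|p(x)| for all x ∈ ℝⁿ. Then r is homogeneous of degree d, i.e., every monomial occurring in r has total degree exactly d (in particular r = 0 is allowed). -/
open Polynomial Filter Finset

/-- Evaluation of a homogeneous polynomial at a scaled point. -/
lemma aux_eval_smul {σ : Type*} {φ : MvPolynomial σ ℝ} {m : ℕ}
    (hφ : φ.IsHomogeneous m) (c : ℝ) (x : σ → ℝ) :
    MvPolynomial.eval (c • x) φ = c ^ m * MvPolynomial.eval x φ := by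
  rw [MvPolynomial.eval_eq, MvPolynomial.eval_eq, Finset.mul_sum]
  refine Finset.sum_congr rfl fun s hs => ?_
  have hdeg : ∑ i ∈ s.support, s i = m := by
    have := hφ (MvPolynomial.mem_support_iff.mp hs)
    simpa [Finsupp.weight_apply, Finsupp.sum, Finsupp.degree] using this
  have : ∏ i ∈ s.support, ((c • x) i) ^ s i
      = c ^ m * ∏ i ∈ s.support, x i ^ s i := by
    simp only [Pi.smul_apply, smul_eq_mul, mul_pow]
    rw [Finset.prod_mul_distrib, Finset.prod_pow_eq_pow_sum, hdeg]
  rw [this]; ring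

/-- A real polynomial bounded by `C * t ^ d` on `(0, ∞)` has degree at most `d`. -/
lemma aux_deg_le (q : Polynomial ℝ) (d : ℕ) (C : ℝ)
    (hb : ∀ t : ℝ, 0 < t → |q.eval t| ≤ C * t ^ d) : q.degree ≤ d := by
  by_contra hlt
  push_neg at hlt
  have hX : (Polynomial.X ^ d : Polynomial ℝ) ≠ 0 := pow_ne_zero _ Polynomial.X_ne_zero
  have hdeg : (Polynomial.X ^ d : Polynomial ℝ).degree < q.degree := by
    simpa [Polynomial.degree_X_pow] using hlt
  have ht := q.abs_div_tendsto_atTop_of_degree_gt (Polynomial.X ^ d) hdeg hX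
  have h1 : ∀ᶠ t : ℝ in atTop,
      |q.eval t / Polynomial.eval t (Polynomial.X ^ d : Polynomial ℝ)| ≤ C := by
    filter_upwards [eventually_gt_atTop (0 : ℝ)] with t htpos
    have hpow : (0 : ℝ) < t ^ d := pow_pos htpos d
    rw [abs_div, Polynomial.eval_pow, Polynomial.eval_X, abs_pow,
      abs_of_pos htpos, div_le_iff₀ hpow]
    exact hb t htpos
  have h2 : ∀ᶠ t : ℝ in atTop,
      C < |q.eval t / Polynomial.eval t (Polynomial.X ^ d : Polynomial ℝ)| :=
    ht.eventually_gt_atTop C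
  obtain ⟨t, h1t, h2t⟩ := (h1.and h2).exists
  linarith

/-- If `p` is homogeneous of degree `d` and `|r(x)| ≤ M·|p(x)|` on all of `ℝⁿ`,
then `r` is homogeneous of degree `d`. -/
theorem stmt_7 (n d : ℕ) (p r : MvPolynomial (Fin n) ℝ)
    (hp : p.IsHomogeneous d) (M : ℝ) (hM : 0 ≤ M)
    (h : ∀ x : Fin n → ℝ, |MvPolynomial.eval x r| ≤ M * |MvPolynomial.eval x p|) :
    r.IsHomogeneous d := by
  classical
  set N := r.totalDegree with hN
  set D := max N d with hD
  -- key claim: every homogeneous component other than degree d vanishes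
  have key : ∀ i : ℕ, i ≠ d → MvPolynomial.homogeneousComponent i r = 0 := by
    intro i hid
    apply MvPolynomial.funext
    intro x
    rw [map_zero]
    set a : ℕ → ℝ := fun j => MvPolynomial.eval x (MvPolynomial.homogeneousComponent j r)
      with ha
    have ha_zero : ∀ j, N < j → a j = 0 := by
      intro j hj
      simp only [ha]
      rw [MvPolynomial.homogeneousComponent_eq_zero j r hj, map_zero]
    -- the one-variable polynomial q(t) = ∑ a j t^j
    set q : Polynomial ℝ := ∑ j ∈ Finset.range (D + 1), Polynomial.C (a j) * Polynomial.X ^ j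
      with hq
    have hqcoeff : ∀ j, j ≤ D → q.coeff j = a j := by
      intro j hj
      rw [hq, Polynomial.finset_sum_coeff]
      rw [Finset.sum_eq_single j]
      · simp
      · intro b _ hbj
        simp [Polynomial.coeff_C_mul, Polynomial.coeff_X_pow, Ne.symm hbj]
      · intro hjmem
        exact absurd (Finset.mem_range.mpr (Nat.lt_succ_of_le hj)) hjmem
    have hsub : ∑ j ∈ Finset.range (N + 1), MvPolynomial.homogeneousComponent j r
        = ∑ j ∈ Finset.range (D + 1), MvPolynomial.homogeneousComponent j r := by
      apply Finset.sum_subset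
      · exact Finset.range_subset_range.mpr (Nat.succ_le_succ (le_max_left N d))
      · intro j _ hj
        have hNj : N < j := by
          simpa [Finset.mem_range, Nat.lt_succ_iff] using hj
        exact MvPolynomial.homogeneousComponent_eq_zero j r hNj
    have hsum : r = ∑ j ∈ Finset.range (D + 1), MvPolynomial.homogeneousComponent j r :=
      (MvPolynomial.sum_homogeneousComponent r).symm.trans hsub
    have hqeval : ∀ t : ℝ, q.eval t = MvPolynomial.eval (t • x) r := by
      intro t
      conv_rhs => rw [hsum]
      rw [map_sum, hq, Polynomial.eval_finset_sum]
      refine Finset.sum_congr rfl fun j _ => ?_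
      rw [aux_eval_smul (MvPolynomial.homogeneousComponent_isHomogeneous j r) t x]
      simp only [Polynomial.eval_mul, Polynomial.eval_C, Polynomial.eval_pow,
        Polynomial.eval_X]
      exact mul_comm _ _
    -- the bound on q
    have hbound : ∀ t : ℝ, 0 < t → |q.eval t| ≤ (M * |MvPolynomial.eval x p|) * t ^ d := by
      intro t htpos
      rw [hqeval]
      calc |MvPolynomial.eval (t • x) r| ≤ M * |MvPolynomial.eval (t • x) p| := h _
        _ = (M * |MvPolynomial.eval x p|) * t ^ d := by
            rw [aux_eval_smul hp t x, abs_mul, abs_pow, abs_of_pos htpos]; ring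
    -- degree of q is at most d
    have hdegq : q.degree ≤ d := aux_deg_le q d _ hbound
    have hcoeff_gt : ∀ j, d < j → q.coeff j = 0 := fun j hj =>
      Polynomial.coeff_eq_zero_of_degree_lt (lt_of_le_of_lt hdegq (by exact_mod_cast hj))
    have ha_gt : ∀ j, d < j → a j = 0 := by
      intro j hj
      rcases le_or_gt j D with hjD | hjD
      · have := hcoeff_gt j hj
        rwa [hqcoeff j hjD] at this
      · exact ha_zero j (lt_of_le_of_lt (le_max_left N d) hjD)
    -- the reflected polynomial
    set qr : Polynomial ℝ := ∑ j ∈ Finset.range (d + 1),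
        Polynomial.C (a (d - j)) * Polynomial.X ^ j with hqr
    have hqr_eval : ∀ t : ℝ, 0 < t → qr.eval t = t ^ d * q.eval t⁻¹ := by
      intro t htpos
      have htne : t ≠ 0 := ne_of_gt htpos
      have step1 : qr.eval t = ∑ j ∈ Finset.range (d + 1), a (d - j) * t ^ j := by
        rw [hqr, Polynomial.eval_finset_sum]
        simp
      have step2 : ∑ j ∈ Finset.range (d + 1), a (d - j) * t ^ j
          = ∑ j ∈ Finset.range (d + 1), a j * t ^ (d - j) := by
        have hrefl := Finset.sum_range_reflect (fun j => a j * t ^ (d - j)) (d + 1)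
        simp only [Nat.add_sub_cancel] at hrefl
        rw [← hrefl]
        refine Finset.sum_congr rfl fun j hj => ?_
        have hjd : j ≤ d := Nat.lt_succ_iff.mp (Finset.mem_range.mp hj)
        rw [Nat.sub_sub_self hjd]
      have step3 : t ^ d * q.eval t⁻¹
          = ∑ j ∈ Finset.range (D + 1), a j * (t ^ d * t⁻¹ ^ j) := by
        rw [hq, Polynomial.eval_finset_sum, Finset.mul_sum]
        refine Finset.sum_congr rfl fun j _ => ?_
        simp only [Polynomial.eval_mul, Polynomial.eval_C, Polynomial.eval_pow,
          Polynomial.eval_X]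
        ring
      have step4 : ∑ j ∈ Finset.range (D + 1), a j * (t ^ d * t⁻¹ ^ j)
          = ∑ j ∈ Finset.range (d + 1), a j * t ^ (d - j) := by
        rw [← Finset.sum_subset (Finset.range_subset_range.mpr
          (Nat.succ_le_succ (le_max_right N d)))
          (fun j _ hj => by
            have hdj : d < j := by simpa [Finset.mem_range, Nat.lt_succ_iff] using hj
            rw [ha_gt j hdj, zero_mul])]
        refine Finset.sum_congr rfl fun j hj => ?_
        have hjd : j ≤ d := Nat.lt_succ_iff.mp (Finset.mem_range.mp hj)
        rw [pow_sub₀ t htne hjd, inv_pow]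
      rw [step1, step2, step3, step4]
    have hqr_bound : ∀ t : ℝ, 0 < t →
        |qr.eval t| ≤ (M * |MvPolynomial.eval x p|) * t ^ 0 := by
      intro t htpos
      have htne : t ≠ 0 := ne_of_gt htpos
      have htinv : (0 : ℝ) < t⁻¹ := inv_pos.mpr htpos
      rw [hqr_eval t htpos, abs_mul, abs_pow, abs_of_pos htpos, pow_zero, mul_one]
      calc t ^ d * |q.eval t⁻¹|
          ≤ t ^ d * ((M * |MvPolynomial.eval x p|) * t⁻¹ ^ d) :=
            mul_le_mul_of_nonneg_left (hbound t⁻¹ htinv) (le_of_lt (pow_pos htpos d))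
        _ = M * |MvPolynomial.eval x p| := by
            rw [inv_pow, mul_comm (M * |MvPolynomial.eval x p|) _, ← mul_assoc,
              mul_inv_cancel₀ (pow_ne_zero d htne), one_mul]
    have hdegqr : qr.degree ≤ 0 := aux_deg_le qr 0 _ hqr_bound
    have hqr_coeff : ∀ j, j ≤ d → qr.coeff j = a (d - j) := by
      intro j hj
      rw [hqr, Polynomial.finset_sum_coeff]
      rw [Finset.sum_eq_single j]
      · simp
      · intro b _ hbj
        simp [Polynomial.coeff_C_mul, Polynomial.coeff_X_pow, Ne.symm hbj]
      · intro hjmem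
        exact absurd (Finset.mem_range.mpr (Nat.lt_succ_of_le hj)) hjmem
    -- now conclude a i = 0
    show a i = 0
    rcases lt_or_gt_of_ne hid with hlt | hgt
    · have hj : d - i ≤ d := Nat.sub_le _ _
      have hji : d - (d - i) = i := Nat.sub_sub_self (le_of_lt hlt)
      have h0 : (0 : ℕ) < d - i := Nat.sub_pos_of_lt hlt
      have := Polynomial.coeff_eq_zero_of_degree_lt
        (lt_of_le_of_lt hdegqr (by exact_mod_cast h0) : qr.degree < (d - i : ℕ))
      rwa [hqr_coeff (d - i) hj, hji] at this
    · exact ha_gt i hgt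
  -- conclude: r equals its degree-d component
  have hr : r = MvPolynomial.homogeneousComponent d r := by
    conv_lhs => rw [← MvPolynomial.sum_homogeneousComponent r]
    rw [Finset.sum_eq_single d (fun i _ hi => key i hi)]
    intro hd
    exact MvPolynomial.homogeneousComponent_eq_zero d r
      (by simpa [Finset.mem_range, Nat.lt_succ_iff] using hd)
  rw [hr]
  exact MvPolynomial.homogeneousComponent_isHomogeneous d r
end

section
/- Let p, r ∈ ℝ[x₁,…,xₙ] with p ≠ 0, and suppose there is M ≥ 0 such that |r(x)| ≤ M·|p(x)| for all x ∈ ℝⁿ. Fix η = (n₁,…,nₙ) ∈ ℕⁿ and, with t a new indeterminate, expand p(t^{n₁}x₁,…,t^{nₙ}xₙ) = Σ_e t^e · P_e(x) and r(t^{n₁}x₁,…,t^{nₙ}xₙ) = Σ_e t^e · R_e(x) in the polynomial ring ℝ[t, x₁,…,xₙ]. Let d := min{ e : P_e ≠ 0 }. Then R_e = 0 for every e < d, and |R_d(x)| ≤ M·|P_d(x)| for all x ∈ ℝⁿ. -/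
open MvPolynomial Polynomial

/-- Pointwise bound off `0` extends to `0` by continuity. -/
lemma aux_cont_le (f g : Polynomial ℝ) (M : ℝ)
    (h : ∀ t : ℝ, t ≠ 0 → |f.eval t| ≤ M * |g.eval t|) :
    |f.eval 0| ≤ M * |g.eval 0| := by
  have hf : Filter.Tendsto (fun t => |f.eval t|) (nhdsWithin (0:ℝ) {0}ᶜ)
      (nhds |f.eval 0|) :=
    ((f.continuous_aeval.abs).continuousAt.tendsto).mono_left nhdsWithin_le_nhds
  have hg : Filter.Tendsto (fun t => M * |g.eval t|) (nhdsWithin (0:ℝ) {0}ᶜ)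
      (nhds (M * |g.eval 0|)) :=
    ((continuous_const.mul g.continuous_aeval.abs).continuousAt.tendsto).mono_left
      nhdsWithin_le_nhds
  refine le_of_tendsto_of_tendsto hf hg ?_
  exact Filter.eventually_of_mem self_mem_nhdsWithin (fun t ht => h t ht)

/-- Key step: if `|f| ≤ M |g|` pointwise and all coefficients below `e` of both vanish,
then the bound holds for the `e`-th coefficients. -/
lemma aux_step (f g : Polynomial ℝ) (M : ℝ)
    (h : ∀ t : ℝ, |f.eval t| ≤ M * |g.eval t|) (e : ℕ)
    (hf : ∀ k < e, f.coeff k = 0) (hg : ∀ k < e, g.coeff k = 0) :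
    |f.coeff e| ≤ M * |g.coeff e| := by
  obtain ⟨f₁, hf₁⟩ : (X : Polynomial ℝ) ^ e ∣ f := (X_pow_dvd_iff).mpr hf
  obtain ⟨g₁, hg₁⟩ : (X : Polynomial ℝ) ^ e ∣ g := (X_pow_dvd_iff).mpr hg
  have hcf : f.coeff e = f₁.eval 0 := by
    rw [hf₁, ← coeff_zero_eq_eval_zero]
    have := coeff_X_pow_mul f₁ e 0
    simpa using this
  have hcg : g.coeff e = g₁.eval 0 := by
    rw [hg₁, ← coeff_zero_eq_eval_zero]
    have := coeff_X_pow_mul g₁ e 0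
    simpa using this
  rw [hcf, hcg]
  refine aux_cont_le f₁ g₁ M ?_
  intro t ht
  have h1 := h t
  rw [hf₁, hg₁] at h1
  simp only [Polynomial.eval_mul, Polynomial.eval_pow, Polynomial.eval_X, abs_mul, abs_pow] at h1
  have hpos : 0 < |t| ^ e := pow_pos (abs_pos.mpr ht) e
  have : |t| ^ e * |f₁.eval t| ≤ M * (|t| ^ e * |g₁.eval t|) := h1
  nlinarith [this, hpos]

/-- If `|r(x)| ≤ M·|p(x)|` on `ℝⁿ`, then under the weighted scaling
`x_i ↦ t^{n_i} x_i` the expansion coefficients of `r` in `t` vanish below the trailing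
degree `d` of `p`, and the trailing coefficient of `r` satisfies the same pointwise bound
relative to the trailing coefficient of `p`. -/
theorem stmt_9 (n : ℕ) (p r : MvPolynomial (Fin n) ℝ) (hp : p ≠ 0)
    (M : ℝ) (hM : 0 ≤ M)
    (h : ∀ x : Fin n → ℝ, |MvPolynomial.eval x r| ≤ M * |MvPolynomial.eval x p|)
    (η : Fin n → ℕ)
    (Φ : MvPolynomial (Fin n) ℝ →ₐ[ℝ] Polynomial (MvPolynomial (Fin n) ℝ))
    (hΦ : Φ = MvPolynomial.aeval (fun i : Fin n =>
      (Polynomial.X : Polynomial (MvPolynomial (Fin n) ℝ)) ^ η i *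
        Polynomial.C (MvPolynomial.X i)))
    (d : ℕ) (hd1 : (Φ p).coeff d ≠ 0) (hd2 : ∀ e < d, (Φ p).coeff e = 0) :
    (∀ e < d, (Φ r).coeff e = 0) ∧
    ∀ x : Fin n → ℝ,
      |MvPolynomial.eval x ((Φ r).coeff d)| ≤ M * |MvPolynomial.eval x ((Φ p).coeff d)| := by
  -- the basic evaluation identity
  have key : ∀ (q : MvPolynomial (Fin n) ℝ) (x : Fin n → ℝ) (t : ℝ),
      Polynomial.eval t (Polynomial.map (MvPolynomial.eval x) (Φ q)) =
        MvPolynomial.eval (fun i => t ^ η i * x i) q := by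
    subst hΦ
    intro q x t
    induction q using MvPolynomial.induction_on with
    | C a => simp
    | add p q hp hq =>
      simp only [map_add, Polynomial.map_add, Polynomial.eval_add, hp, hq]
    | mul_X p i hp =>
      simp only [map_mul, MvPolynomial.aeval_X, Polynomial.map_mul, Polynomial.eval_mul, hp,
        Polynomial.map_pow, Polynomial.eval_pow, Polynomial.map_X, Polynomial.eval_X,
        Polynomial.map_C, Polynomial.eval_C, MvPolynomial.eval_X]
  -- pointwise bound for the mapped polynomials
  have hb : ∀ (x : Fin n → ℝ) (t : ℝ),
      |Polynomial.eval t (Polynomial.map (MvPolynomial.eval x) (Φ r))| ≤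
        M * |Polynomial.eval t (Polynomial.map (MvPolynomial.eval x) (Φ p))| := by
    intro x t
    rw [key r, key p]
    exact h _
  -- part 1 by strong induction
  have part1 : ∀ e < d, (Φ r).coeff e = 0 := by
    intro e
    induction e using Nat.strong_induction_on with
    | _ e ih =>
      intro hed
      have hz : ∀ x : Fin n → ℝ, MvPolynomial.eval x ((Φ r).coeff e) = 0 := by
        intro x
        have := aux_step (Polynomial.map (MvPolynomial.eval x) (Φ r))
          (Polynomial.map (MvPolynomial.eval x) (Φ p)) M (hb x) e
          (fun k hk => by simp [Polynomial.coeff_map, ih k hk (hk.trans hed)])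
          (fun k hk => by simp [Polynomial.coeff_map, hd2 k (hk.trans hed)])
        rw [Polynomial.coeff_map, Polynomial.coeff_map, hd2 e hed] at this
        simp only [map_zero, abs_zero, mul_zero] at this
        exact abs_nonpos_iff.mp this
      have : (Φ r).coeff e = (0 : MvPolynomial (Fin n) ℝ) :=
        MvPolynomial.funext (fun x => by simpa using hz x)
      exact this
  refine ⟨part1, fun x => ?_⟩
  have := aux_step (Polynomial.map (MvPolynomial.eval x) (Φ r))
    (Polynomial.map (MvPolynomial.eval x) (Φ p)) M (hb x) d
    (fun k hk => by simp [Polynomial.coeff_map, part1 k hk])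
    (fun k hk => by simp [Polynomial.coeff_map, hd2 k hk])
  rwa [Polynomial.coeff_map, Polynomial.coeff_map] at this
end

section
/- For every n ≥ 1 and every field F, the determinant det Tₙ of the n×n Toeplitz matrix of indeterminates is irreducible in the polynomial ring F[x_{1−n}, …, x_{n−1}]. -/
/-- The determinant of the `n×n` Toeplitz matrix of indeterminates, whose `(i,j)` entry is
the variable `x_{i-j}`; the `2n-1` variables `x_{1-n}, …, x_{n-1}` are encoded by
`Fin (2*n-1)`, with `x_z` corresponding to index `z + (n-1)`. -/
noncomputable def toeplitzDet (F : Type*) [Field F] (n : ℕ) :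
    MvPolynomial (Fin (2 * n - 1)) F :=
  Matrix.det (Matrix.of fun i j : Fin n =>
    MvPolynomial.X (⟨(i : ℕ) + (n - 1) - (j : ℕ), by
      have hi := i.isLt; have hj := j.isLt; omega⟩ : Fin (2 * n - 1)))

/-!
Induction on `n`. The corner variable `x_n` of the Toeplitz matrix `T_{n+1}` occurs only in its
bottom-left entry, so expanding along the last row gives `det T_{n+1} = M * x_n + B` with
`M = ± det T_n(x_{z-1})` and `B` both free of `x_n`. By induction `M` is irreducible, and such a
polynomial of degree one in `x_n` is irreducible as soon as `M ∤ B`. This is seen under the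
specialization `x_0 = 1`, `x_z = 0` otherwise: it sends `T_{n+1}` to the identity and the first row
of the shifted matrix `T_n(x_{z-1})` to zero, hence `M ↦ 0` and `B ↦ 1`.
-/

open MvPolynomial

theorem Matrix.det_mem_of_forall_mem {R S n : Type*} [CommRing R] [SetLike S R]
    [SubringClass S R] [Fintype n] [DecidableEq n] {s : S} {A : Matrix n n R}
    (h : ∀ i j, A i j ∈ s) : A.det ∈ s := by
  rw [Matrix.det_apply]
  exact sum_mem fun σ _ => by
    rw [Units.smul_def]; exact zsmul_mem (prod_mem fun i _ => h _ _) _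

theorem Matrix.det_eq_mul_add_det_updateRow_zero {R : Type*} [CommRing R] {k : ℕ}
    (A : Matrix (Fin (k + 1)) (Fin (k + 1)) R) (i j : Fin (k + 1)) :
    A.det = (-1) ^ (i + j : ℕ) * A i j * (A.submatrix i.succAbove j.succAbove).det
      + (A.updateRow i (Function.update (A i) j 0)).det := by
  rw [det_succ_row A i, det_succ_row _ i, ← Finset.add_sum_erase _ _ (Finset.mem_univ j),
    ← Finset.add_sum_erase _ _ (Finset.mem_univ j)]
  simp only [updateRow_self, submatrix_updateRow_succAbove, Function.update_self, mul_zero,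
    zero_mul, zero_add]
  congr 1
  refine Finset.sum_congr rfl fun j' hj' => ?_
  rw [Function.update_of_ne (Finset.ne_of_mem_erase hj')]

theorem MvPolynomial.isLocalHom_rename {σ τ R : Type*} [CommSemiring R] {f : σ → τ}
    (hf : Function.Injective f) : IsLocalHom (rename (R := R) f) :=
  ⟨fun p hp => by simpa only [killCompl_rename_app] using hp.map (killCompl hf)⟩

noncomputable def genericToeplitz (R : Type*) [CommRing R] (n : ℕ) :
    Matrix (Fin n) (Fin n) (MvPolynomial ℤ R) :=
  Matrix.of fun i j => X ((i : ℤ) - j)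

noncomputable def genericToeplitzWithoutCorner (R : Type*) [CommRing R] (n : ℕ) :
    Matrix (Fin (n + 1)) (Fin (n + 1)) (MvPolynomial ℤ R) :=
  (genericToeplitz R (n + 1)).updateRow (Fin.last n)
    (Function.update (genericToeplitz R (n + 1) (Fin.last n)) 0 0)

section

variable {R : Type*} [CommRing R]

theorem det_genericToeplitz_succ (n : ℕ) :
    (genericToeplitz R (n + 1)).det =
      (-1) ^ n * rename (Equiv.subRight 1) (genericToeplitz R n).det * X (n : ℤ)
        + (genericToeplitzWithoutCorner R n).det := by
  have hminor : ((genericToeplitz R (n + 1)).submatrix (Fin.last n).succAbove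
      (0 : Fin (n + 1)).succAbove).det = rename (Equiv.subRight 1) (genericToeplitz R n).det := by
    rw [AlgHom.map_det]
    congr 1
    ext i j : 1
    simp only [genericToeplitz, Fin.succAbove_last, Fin.succAbove_zero, Matrix.submatrix_apply,
      AlgHom.mapMatrix_apply, Matrix.map_apply, Matrix.of_apply, rename_X, Fin.val_castSucc,
      Fin.val_succ, Equiv.subRight_apply, Nat.cast_add, Nat.cast_one, sub_sub]
  rw [Matrix.det_eq_mul_add_det_updateRow_zero _ (Fin.last n) 0, hminor]
  simp [genericToeplitzWithoutCorner, genericToeplitz, mul_right_comm]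

theorem genericToeplitz_map_eval_single (n : ℕ) :
    (genericToeplitz R n).map (eval (Pi.single 0 1)) = 1 := by
  ext i j
  simp [genericToeplitz, Matrix.one_apply, Pi.single_apply, sub_eq_zero, Fin.ext_iff]

theorem rename_det_genericToeplitz_mem_supported [Nontrivial R] (n : ℕ) :
    rename (Equiv.subRight 1) (genericToeplitz R n).det ∈ supported R {(n : ℤ)}ᶜ := by
  rw [AlgHom.map_det]
  refine Matrix.det_mem_of_forall_mem fun i j => ?_
  simp only [genericToeplitz, AlgHom.mapMatrix_apply, Matrix.map_apply, Matrix.of_apply,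
    rename_X, X_mem_supported, Equiv.subRight_apply]
  rw [Set.mem_compl_singleton_iff]
  omega

theorem det_genericToeplitzWithoutCorner_mem_supported [Nontrivial R] (n : ℕ) :
    (genericToeplitzWithoutCorner R n).det ∈ supported R {(n : ℤ)}ᶜ := by
  refine Matrix.det_mem_of_forall_mem fun i j => ?_
  simp only [genericToeplitzWithoutCorner, Matrix.updateRow_apply, Function.update_apply,
    genericToeplitz, Matrix.of_apply]
  split_ifs with hi hj
  · exact zero_mem _
  all_goals
    rw [X_mem_supported]
    simp only [Fin.ext_iff, Fin.val_last, Fin.val_zero] at *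
    rw [Set.mem_compl_singleton_iff]
    omega

theorem eval_rename_det_genericToeplitz {n : ℕ} (hn : 1 ≤ n) :
    eval (Pi.single 0 1) (rename (Equiv.subRight 1) (genericToeplitz R n).det) = 0 := by
  rw [eval_rename, RingHom.map_det]
  refine Matrix.det_eq_zero_of_row_eq_zero ⟨0, hn⟩ fun j => ?_
  simp only [genericToeplitz, RingHom.mapMatrix_apply, Matrix.map_apply, Matrix.of_apply,
    eval_X, Function.comp_apply, Equiv.subRight_apply, Pi.single_apply, ite_eq_right_iff]
  omega

theorem eval_det_genericToeplitzWithoutCorner {n : ℕ} (hn : 1 ≤ n) :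
    eval (Pi.single 0 1) (genericToeplitzWithoutCorner R n).det = 1 := by
  have h := congrArg (eval (Pi.single (0 : ℤ) (1 : R))) (det_genericToeplitz_succ (R := R) n)
  rwa [RingHom.map_det, RingHom.mapMatrix_apply, genericToeplitz_map_eval_single, Matrix.det_one,
    map_add, map_mul, map_mul, eval_rename_det_genericToeplitz hn, mul_zero, zero_mul, zero_add,
    eq_comm] at h

theorem irreducible_det_genericToeplitz_succ [IsDomain R] {n : ℕ} (hn : 1 ≤ n)
    (ih : Irreducible (genericToeplitz R n).det) :
    Irreducible (genericToeplitz R (n + 1)).det := by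
  have hunit : IsUnit ((-1) ^ n : MvPolynomial ℤ R) := (isUnit_one.neg).pow n
  have hcoeff : Irreducible ((-1) ^ n * rename (Equiv.subRight 1) (genericToeplitz R n).det) :=
    (irreducible_isUnit_mul hunit).mpr (ih.map (renameEquiv R (Equiv.subRight (1 : ℤ))))
  have hndvd : ¬ (-1) ^ n * rename (Equiv.subRight 1) (genericToeplitz R n).det ∣
      (genericToeplitzWithoutCorner R n).det := fun h => by
    simpa [eval_rename_det_genericToeplitz hn, eval_det_genericToeplitzWithoutCorner hn]
      using map_dvd (eval (Pi.single (0 : ℤ) (1 : R))) h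
  rw [det_genericToeplitz_succ]
  refine irreducible_mul_X_add _ _ _ hcoeff.ne_zero (fun h => ?_) (fun h => ?_)
    (hcoeff.isRelPrime_iff_not_dvd.mpr hndvd)
  · exact mem_supported.mp (mul_mem (pow_mem (neg_mem (one_mem _)) n)
      (rename_det_genericToeplitz_mem_supported n)) h rfl
  · exact mem_supported.mp (det_genericToeplitzWithoutCorner_mem_supported n) h rfl

theorem irreducible_det_genericToeplitz [IsDomain R] {n : ℕ} (hn : 1 ≤ n) :
    Irreducible (genericToeplitz R n).det := by
  induction n, hn using Nat.le_induction with
  | base =>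
    simpa [genericToeplitz, Matrix.det_fin_one]
      using (X_prime (R := R) (i := (0 : ℤ))).irreducible
  | succ n hn ih => exact irreducible_det_genericToeplitz_succ hn ih

end

theorem rename_toeplitzDet (F : Type*) [Field F] (n : ℕ) :
    rename (fun k : Fin (2 * n - 1) => (k : ℤ) - (n - 1)) (toeplitzDet F n)
      = (genericToeplitz F n).det := by
  rw [toeplitzDet, AlgHom.map_det]
  congr 1
  ext i j : 1
  simp only [AlgHom.mapMatrix_apply, Matrix.map_apply, Matrix.of_apply, rename_X, genericToeplitz]
  exact congrArg X (by omega)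

/-- The determinant of the Toeplitz matrix of indeterminates is irreducible
over any field. -/
theorem stmt_10 (F : Type*) [Field F] (n : ℕ) (hn : 1 ≤ n) :
    Irreducible (toeplitzDet F n) := by
  have hinj : Function.Injective fun k : Fin (2 * n - 1) => (k : ℤ) - (n - 1) :=
    fun a b h => Fin.ext (by simpa using h)
  have : IsLocalHom _ := isLocalHom_rename (R := F) hinj
  refine Irreducible.of_map (f := rename fun k : Fin (2 * n - 1) => (k : ℤ) - (n - 1)) ?_
  rw [rename_toeplitzDet]
  exact irreducible_det_genericToeplitz hn
end

section
/- Let n ≥ 1 and take F = ℝ. The product over all indices j with 1−n ≤ j ≤ n−1 of the partial derivatives ∂(det Tₙ)/∂x_j is a nonzero polynomial; equivalently, there is a nonempty Zariski-open set of points of ℝ^{2n−1} at which every component of the gradient of det Tₙ is nonzero, so that at such regular points of the hypersurface {det Tₙ = 0} the tangent hyperplane is parallel to no coordinate direction. -/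
open MvPolynomial Equiv

section DetOfVariables

variable {ι σ : Type*} [Fintype ι]

/-- The exponent vector of the term `∏ i, X (f (τ i) i)` in the Leibniz expansion of
`det (of fun i j => X (f i j))`. -/
noncomputable def permDegree (f : ι → ι → σ) (τ : Perm ι) : σ →₀ ℕ :=
  ∑ i, Finsupp.single (f (τ i) i) 1

theorem permDegree_ne_zero_iff (f : ι → ι → σ) (τ : Perm ι) (v : σ) :
    permDegree f τ v ≠ 0 ↔ ∃ i, f (τ i) i = v := by
  classical
  simp [permDegree, Finsupp.single_apply, Finset.sum_apply']

theorem coeff_permDegree_det_X [DecidableEq ι] {R : Type*} [CommRing R] (f : ι → ι → σ)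
    (τ : Perm ι) (huniq : ∀ τ', permDegree f τ' = permDegree f τ → τ' = τ) :
    coeff (permDegree f τ) (Matrix.of fun i j => (X (f i j) : MvPolynomial σ R)).det
      = Perm.sign τ := by
  classical
  have hprod (τ' : Perm ι) :
      ∏ i, (X (f (τ' i) i) : MvPolynomial σ R) = monomial (permDegree f τ') 1 := by
    rw [permDegree, monomial_sum_one]; rfl
  rw [Matrix.det_apply, coeff_sum, Finset.sum_eq_single τ]
  · simp only [Matrix.of_apply]
    rw [hprod, Units.smul_def, coeff_smul, coeff_monomial, if_pos rfl, zsmul_eq_mul, mul_one]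
  · intro τ' _ hτ'
    simp only [Matrix.of_apply, hprod, coeff_smul, coeff_monomial]
    rw [if_neg fun h => hτ' (huniq τ' h), smul_zero]
  · simp

end DetOfVariables

theorem MvPolynomial.pderiv_ne_zero_of_coeff_ne_zero {σ R : Type*} [CommSemiring R]
    [NoZeroDivisors R] [CharZero R] {p : MvPolynomial σ R} {m : σ →₀ ℕ} {i : σ}
    (hp : coeff m p ≠ 0) (hi : m i ≠ 0) : pderiv i p ≠ 0 := by
  classical
  intro h
  have hle : Finsupp.single i 1 ≤ m := Finsupp.single_le_iff.2 (Nat.one_le_iff_ne_zero.2 hi)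
  have := coeff_pderiv (i := i) p (m - Finsupp.single i 1)
  rw [h, coeff_zero, tsub_add_cancel_of_le hle, Finsupp.tsub_apply, Finsupp.single_eq_same,
    ← Nat.cast_add_one, Nat.sub_add_cancel (Nat.one_le_iff_ne_zero.2 hi)] at this
  exact mul_ne_zero hp (Nat.cast_ne_zero.2 hi) this.symm

def toeplitzIndex (n : ℕ) (a b : Fin n) : Fin (2 * n - 1) :=
  ⟨(a : ℕ) + (n - 1) - (b : ℕ), by omega⟩

theorem toeplitzDet_eq_det (F : Type*) [Field F] (n : ℕ) :
    toeplitzDet F n = (Matrix.of fun a b => X (toeplitzIndex n a b)).det :=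
  rfl

theorem toeplitzIndex_modEq_iff {n : ℕ} [NeZero n] (a b : Fin n) (j : ℕ) :
    (toeplitzIndex n a b : ℕ) ≡ j [MOD n] ↔ a = b + Fin.ofNat n (j + 1) := by
  have hsum : (toeplitzIndex n a b : ℕ) + (b + 1) = a + n := by
    simp only [toeplitzIndex]; omega
  have hshift : (toeplitzIndex n a b : ℕ) ≡ j [MOD n] ↔
      (toeplitzIndex n a b : ℕ) + (b + 1) ≡ j + (b + 1) [MOD n] :=
    ⟨fun h => h.add_right (b + 1), Nat.ModEq.add_right_cancel' (b + 1)⟩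
  rw [hshift, hsum, Nat.add_modulus_modEq_iff, Nat.ModEq, Nat.mod_eq_of_lt a.isLt, Fin.ext_iff,
    Fin.val_add, Fin.val_ofNat, Nat.add_mod_mod, add_left_comm j]

theorem exists_toeplitzIndex_add_eq {n : ℕ} [NeZero n] (j : Fin (2 * n - 1)) :
    ∃ b : Fin n, toeplitzIndex n (b + Fin.ofNat n (j + 1)) b = j := by
  refine ⟨⟨n - 1 - j, by omega⟩, Fin.ext ?_⟩
  have hval : ((⟨n - 1 - j, by omega⟩ + Fin.ofNat n (j + 1) : Fin n) : ℕ)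
      = (n - 1 - j + (j + 1)) % n := by
    simp [Fin.val_add]
  simp only [toeplitzIndex, hval]
  rcases le_or_gt (j : ℕ) (n - 1) with hjn | hjn
  · rw [show n - 1 - j + (j + 1) = n by omega, Nat.mod_self]
    omega
  · rw [show n - 1 - j + (j + 1) = j + 1 - n + n by omega, Nat.add_mod_right,
      Nat.mod_eq_of_lt (by omega)]
    omega

theorem pderiv_toeplitzDet_ne_zero (F : Type*) [Field F] [CharZero F] (n : ℕ)
    (j : Fin (2 * n - 1)) : pderiv j (toeplitzDet F n) ≠ 0 := by
  have : NeZero n := ⟨by have := j.isLt; omega⟩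
  set ρ : Perm (Fin n) := Equiv.addRight (Fin.ofNat n (j + 1))
  have hρ (a b : Fin n) : (toeplitzIndex n a b : ℕ) ≡ j [MOD n] ↔ a = ρ b :=
    toeplitzIndex_modEq_iff a b j
  have huniq (τ : Perm (Fin n))
      (h : permDegree (toeplitzIndex n) τ = permDegree (toeplitzIndex n) ρ) : τ = ρ := by
    ext1 i
    obtain ⟨i', hi'⟩ := (permDegree_ne_zero_iff _ ρ _).1
      (h ▸ (permDegree_ne_zero_iff _ τ _).2 ⟨i, rfl⟩)
    rw [← hρ, ← hi', hρ]
  have hj : permDegree (toeplitzIndex n) ρ j ≠ 0 :=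
    (permDegree_ne_zero_iff _ ρ _).2 (exists_toeplitzIndex_add_eq j)
  rw [toeplitzDet_eq_det]
  exact pderiv_ne_zero_of_coeff_ne_zero (by simp [coeff_permDegree_det_X _ ρ huniq]) hj

theorem stmt_13_general (n : ℕ) :
    (∏ j : Fin (2 * n - 1), MvPolynomial.pderiv j (toeplitzDet ℝ n)) ≠ 0 :=
  Finset.prod_ne_zero_iff.2 fun j _ => pderiv_toeplitzDet_ne_zero ℝ n j

/-- Over `ℝ`, the product of all partial derivatives of `det Tₙ` is a nonzero
polynomial; hence on a nonempty Zariski-open set every component of the gradient of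
`det Tₙ` is nonzero. -/
theorem stmt_13 (n : ℕ) (hn : 1 ≤ n) :
    (∏ j : Fin (2 * n - 1), MvPolynomial.pderiv j (toeplitzDet ℝ n)) ≠ 0 :=
  stmt_13_general n
end

section
/- Let R be a commutative ring, let S ∈ R, let k ≥ 1, and let δ₁, …, δ_k ∈ R. Define y₁ := (1 + δ₁)·S and, for 2 ≤ i ≤ k, y_i := (1 + δ_i)·(S − Σ_{j=1}^{i−1} y_j). Then Σ_{j=1}^{k} y_j = (1 − (−1)^k · ∏_{j=1}^{k} δ_j) · S. -/
/-! Each step multiplies the residual `S - ∑_{j < i} y j` by `-δ i`, since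
`r - (1 + δ) * r = -δ * r`; after `k` steps the residual is `(∏ j, -δ j) * S`. -/

open Finset

theorem sub_sum_eq_prod_neg_mul {ι R : Type*} [LinearOrder ι] [CommRing R] (S : R)
    (δ y : ι → R) (s : Finset ι)
    (hy : ∀ i ∈ s, y i = (1 + δ i) * (S - ∑ j ∈ s with j < i, y j)) :
    S - ∑ j ∈ s, y j = (∏ j ∈ s, -δ j) * S := by
  induction s using Finset.induction_on_max with
  | empty => simp
  | insert a s hlt ih =>
    have ha : a ∉ s := fun h => lt_irrefl a (hlt a h)
    have hy_s : ∀ i ∈ s, y i = (1 + δ i) * (S - ∑ j ∈ s with j < i, y j) := by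
      intro i hi
      rw [hy i (mem_insert_of_mem hi), filter_insert, if_neg (hlt i hi).not_gt]
    have hy_a : y a = (1 + δ a) * (S - ∑ j ∈ s, y j) := by
      rw [hy a (mem_insert_self a s), filter_insert, if_neg (lt_irrefl a),
        filter_true_of_mem hlt]
    rw [sum_insert ha, prod_insert ha, mul_assoc, ← ih hy_s, hy_a]
    ring

theorem stmt_15_general (R : Type*) [CommRing R] (S : R) (k : ℕ)
    (δ : Fin k → R) (y : Fin k → R)
    (hy : ∀ i : Fin k, y i = (1 + δ i) * (S - ∑ j ∈ Finset.Iio i, y j)) :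
    ∑ j, y j = (1 - (-1 : R) ^ k * ∏ j, δ j) * S := by
  have residual := sub_sum_eq_prod_neg_mul S δ y univ fun i _ => by
    rw [filter_gt_eq_Iio]; exact hy i
  rw [prod_neg, card_univ, Fintype.card_fin] at residual
  linear_combination -residual

/-- If `y i = (1 + δ i) * (S - Σ_{j < i} y j)` for all `i`, then
`Σ_j y j = (1 - (-1)^k * ∏_j δ_j) * S`. -/
theorem stmt_15 (R : Type*) [CommRing R] (S : R) (k : ℕ) (hk : 1 ≤ k)
    (δ : Fin k → R) (y : Fin k → R)
    (hy : ∀ i : Fin k, y i = (1 + δ i) * (S - ∑ j ∈ Finset.Iio i, y j)) :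
    ∑ j, y j = (1 - (-1 : R) ^ k * ∏ j, δ j) * S :=
  stmt_15_general R S k δ y hy
end

section
/- For every η with 0 < η < 1 there exists ε > 0 such that for all real numbers x₁, x₂, x₃ with |x₁ + x₂| > 2·|x₃| and all real δ₁, δ₂ with |δ₁| ≤ ε and |δ₂| ≤ ε, one has |((x₁ + x₂)(1 + δ₁) + x₃)(1 + δ₂) − (x₁ + x₂ + x₃)| ≤ η · |x₁ + x₂ + x₃|. -/
/-- The straightforward rounded-arithmetic algorithm for `x₁ + x₂ + x₃`
is accurate on the open set `{|x₁ + x₂| > 2|x₃|}`. -/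
theorem stmt_16 : ∀ η : ℝ, 0 < η → η < 1 →
    ∃ ε : ℝ, 0 < ε ∧ ∀ x₁ x₂ x₃ δ₁ δ₂ : ℝ,
      2 * |x₃| < |x₁ + x₂| → |δ₁| ≤ ε → |δ₂| ≤ ε →
      |((x₁ + x₂) * (1 + δ₁) + x₃) * (1 + δ₂) - (x₁ + x₂ + x₃)| ≤
        η * |x₁ + x₂ + x₃| := by
  intro η hη hη1
  refine ⟨η / 5, by linarith, ?_⟩
  intro x₁ x₂ x₃ δ₁ δ₂ hx h1 h2
  set s := x₁ + x₂ with hs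
  have htri : |s| ≤ |s + x₃| + |x₃| := by
    calc |s| = |(s + x₃) + (-x₃)| := by ring_nf
    _ ≤ |s + x₃| + |(-x₃)| := abs_add_le _ _
    _ = |s + x₃| + |x₃| := by rw [abs_neg]
  have hs2 : |s| ≤ 2 * |s + x₃| := by linarith
  have hkey : ((s) * (1 + δ₁) + x₃) * (1 + δ₂) - (s + x₃)
      = s * δ₁ * (1 + δ₂) + (s + x₃) * δ₂ := by ring
  have habs : |s * δ₁ * (1 + δ₂) + (s + x₃) * δ₂|
      ≤ |s| * |δ₁| * |1 + δ₂| + |s + x₃| * |δ₂| := by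
    calc |s * δ₁ * (1 + δ₂) + (s + x₃) * δ₂|
        ≤ |s * δ₁ * (1 + δ₂)| + |(s + x₃) * δ₂| := abs_add_le _ _
    _ = |s| * |δ₁| * |1 + δ₂| + |s + x₃| * |δ₂| := by
        rw [abs_mul, abs_mul, abs_mul]
  have h1d2 : |1 + δ₂| ≤ 1 + η / 5 := by
    calc |1 + δ₂| ≤ |(1:ℝ)| + |δ₂| := abs_add_le _ _
    _ ≤ 1 + η / 5 := by rw [abs_one]; linarith
  have hA : (0:ℝ) ≤ |s + x₃| := abs_nonneg _
  have hd1 : (0:ℝ) ≤ |δ₁| := abs_nonneg _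
  have hss : (0:ℝ) ≤ |s| := abs_nonneg _
  have h12 : (0:ℝ) ≤ |1 + δ₂| := abs_nonneg _
  have hgoal : |x₁ + x₂ + x₃| = |s + x₃| := by rw [hs]
  rw [show x₁ + x₂ + x₃ = s + x₃ from rfl] at *
  rw [hkey]
  refine habs.trans ?_
  nlinarith [mul_nonneg hA hd1, mul_le_mul h1 h1d2 h12 (le_of_lt (by linarith : (0:ℝ) < η/5)),
    mul_nonneg hss hd1]
end

section
/- Let R be a commutative ring, let m ≥ 1, let x₁, …, x_m ∈ R, and fix l with 0 ≤ l ≤ m. Let e₁ < e₂ < ⋯ < e_m be the elements of {0, 1, …, m} ∖ {l} in increasing order, and let A be the m×m matrix with entries A(i, j) = x_i^{e_j}. Then det A = e_{m−l}(x₁, …, x_m) · ∏_{1 ≤ i < j ≤ m} (x_j − x_i), where e_k denotes the k-th elementary symmetric polynomial (e₀ = 1). -/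
/-!
Expanding the Vandermonde determinant of `(-X, x₁, …, xₘ)` over `R[X]` along its first row
gives `∑ₗ Dₗ Xˡ`, where `Dₗ` is the minor with the column of `l`-th powers deleted; the
product formula gives `∏ᵢ (X + xᵢ) · ∏_{i<j} (xⱼ - xᵢ)`. Comparing coefficients of `Xˡ`
(Vieta) yields `Dₗ = e_{m-l}(x) · ∏_{i<j} (xⱼ - xᵢ)`. Using `-X` rather than `X` makes the
cofactor signs `(-1)ˡ` cancel.
-/

open Polynomial Finset

theorem Fin.val_succAbove {n : ℕ} (p : Fin (n + 1)) (i : Fin n) :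
    (p.succAbove i : ℕ) = if (i : ℕ) < p then (i : ℕ) else (i : ℕ) + 1 := by
  unfold Fin.succAbove
  split_ifs <;> simp_all [Fin.lt_def]

namespace Matrix

variable {R : Type*} [CommRing R] {n : ℕ}

theorem det_vandermonde_cons (a : R) (v : Fin n → R) :
    det (vandermonde (Fin.cons a v)) = (∏ i, (v i - a)) * det (vandermonde v) := by
  rw [det_vandermonde, det_vandermonde, Fin.prod_univ_succ, Fin.prod_Ioi_zero]
  simp [Fin.prod_Ioi_succ]

theorem det_vandermonde_cons_eq_sum (a : R) (v : Fin n → R) :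
    det (vandermonde (Fin.cons a v)) =
      ∑ j : Fin (n + 1), (-1) ^ (j : ℕ) * a ^ (j : ℕ) *
        det (of fun i k => v i ^ (j.succAbove k : ℕ)) := by
  rw [det_succ_row_zero]
  rfl

theorem sum_C_det_pow_succAbove_mul_X_pow (x : Fin n → R) :
    ∑ j : Fin (n + 1), C (det (of fun i k => x i ^ (j.succAbove k : ℕ))) * X ^ (j : ℕ) =
      (∏ i, (X + C (x i))) * C (det (vandermonde x)) := by
  have hC (M : Matrix (Fin n) (Fin n) R) : C (det M) = det (M.map C) := RingHom.map_det C M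
  calc ∑ j : Fin (n + 1), C (det (of fun i k => x i ^ (j.succAbove k : ℕ))) * X ^ (j : ℕ)
      = ∑ j : Fin (n + 1), (-1) ^ (j : ℕ) * (-X) ^ (j : ℕ) *
          det (of fun i k => (C ∘ x) i ^ (j.succAbove k : ℕ)) := by
        refine sum_congr rfl fun j _ => ?_
        rw [← mul_pow, neg_one_mul, neg_neg, mul_comm, hC]
        congr 2
        ext
        simp
    _ = det (vandermonde (Fin.cons (-X) (C ∘ x))) := (det_vandermonde_cons_eq_sum _ _).symm
    _ = (∏ i, (C (x i) - -X)) * det (vandermonde (C ∘ x)) := det_vandermonde_cons _ _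
    _ = (∏ i, (X + C (x i))) * C (det (vandermonde x)) := by
        simp only [sub_neg_eq_add, add_comm _ X, hC]
        congr 2
        ext
        simp [vandermonde_apply]

theorem det_pow_succAbove (x : Fin n → R) (p : Fin (n + 1)) :
    det (of fun i k => x i ^ (p.succAbove k : ℕ)) =
      (∑ s ∈ powersetCard (n - p) univ, ∏ i ∈ s, x i) * det (vandermonde x) := by
  have h := congrArg (coeff · p) (sum_C_det_pow_succAbove_mul_X_pow x)
  simp only [finsetSum_coeff, coeff_C_mul_X_pow, coeff_mul_C] at h
  rw [Finset.prod_X_add_C_coeff _ _ (by simpa using p.is_le), card_univ, Fintype.card_fin] at h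
  simpa [Fin.val_inj] using h

end Matrix

theorem stmt_17_general (R : Type*) [CommRing R] (m : ℕ) (x : Fin m → R)
    (l : ℕ) (hl : l ≤ m)
    (e : Fin m → ℕ) (he : ∀ j : Fin m, e j = if (j : ℕ) < l then (j : ℕ) else (j : ℕ) + 1) :
    Matrix.det (Matrix.of fun i j : Fin m => x i ^ e j) =
      (∑ s ∈ Finset.powersetCard (m - l) (Finset.univ : Finset (Fin m)), ∏ i ∈ s, x i) *
        ∏ j : Fin m, ∏ i ∈ Finset.Iio j, (x j - x i) := by
  have he_succAbove : e = fun j => ((⟨l, Nat.lt_succ_of_le hl⟩ : Fin (m + 1)).succAbove j : ℕ) :=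
    funext fun j => by rw [he, Fin.val_succAbove]
  rw [he_succAbove, Matrix.det_pow_succAbove, Matrix.det_vandermonde]
  congr 1
  exact Finset.prod_comm' (by simp)

/-- The generalized Vandermonde determinant with column exponents
`{0, 1, …, m} \ {l}` equals the elementary symmetric polynomial `e_{m-l}` times the
Vandermonde product `∏_{i<j} (x_j - x_i)`. -/
theorem stmt_17 (R : Type*) [CommRing R] (m : ℕ) (hm : 1 ≤ m) (x : Fin m → R)
    (l : ℕ) (hl : l ≤ m)
    (e : Fin m → ℕ) (he : ∀ j : Fin m, e j = if (j : ℕ) < l then (j : ℕ) else (j : ℕ) + 1) :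
    Matrix.det (Matrix.of fun i j : Fin m => x i ^ e j) =
      (∑ s ∈ Finset.powersetCard (m - l) (Finset.univ : Finset (Fin m)), ∏ i ∈ s, x i) *
        ∏ j : Fin m, ∏ i ∈ Finset.Iio j, (x j - x i) :=
  stmt_17_general R m x l hl e he
end

section
/- Let n ≥ 1, let q₁, …, q_m ∈ ℂ[x₁,…,xₙ] be nonconstant irreducible polynomials, and let p ∈ ℂ[x₁,…,xₙ] be a nonconstant polynomial whose zero set V(p) is a finite union of finite intersections of sets each of which is an allowable hyperplane Z_i, S_{ij}, D_{ij} or one of the hypersurfaces V(q_l). Then p = c · ∏_j p_j, where c is a nonzero complex constant and each p_j is a power of one of x_i, x_i − x_j, x_i + x_j, or one of the polynomials q_l. -/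
/-!
Every prime factor `g` of `p` vanishes only on `V(p)`, which lies in the zero set of the product
`F` of the polynomials cutting out the basic sets. By the Nullstellensatz (`(g)` is a prime ideal)
`g ∣ F`, so `g` is associated to one of the irreducible factors `x_i`, `x_i ± x_j`, `q_l` of `F`.
Collecting the prime factorization of `p` gives the claim, the leftover unit being a constant.
-/

def IsBasicQSet (n m : ℕ) (q : Fin m → MvPolynomial (Fin n) ℂ)
    (W : Set (Fin n → ℂ)) : Prop :=
  (∃ i : Fin n, W = {x | x i = 0}) ∨
  (∃ i j : Fin n, i ≠ j ∧ W = {x | x i + x j = 0}) ∨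
  (∃ i j : Fin n, i ≠ j ∧ W = {x | x i - x j = 0}) ∨
  (∃ l : Fin m, W = {x | MvPolynomial.eval x (q l) = 0})

open MvPolynomial

namespace UniqueFactorizationMonoid

variable {α : Type*} [CommMonoidWithZero α] [UniqueFactorizationMonoid α]

theorem exists_eq_mul_prod_of_forall_prime_dvd_associated (P : α → Prop) {a : α} (ha : a ≠ 0)
    (hP : ∀ g, Prime g → g ∣ a → ∃ b, Associated g b ∧ P b) :
    ∃ u, IsUnit u ∧ ∃ (s : ℕ) (f : Fin s → α), (∀ t, P (f t)) ∧ a = u * ∏ t, f t := by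
  induction a using induction_on_prime with
  | h₁ => exact absurd rfl ha
  | h₂ u hu => exact ⟨u, hu, 0, Fin.elim0, fun t => t.elim0, by simp⟩
  | h₃ a g ha0 hg ih =>
    obtain ⟨b, hgb, hb⟩ := hP g hg (dvd_mul_right g a)
    obtain ⟨v, rfl⟩ := hgb.symm
    obtain ⟨u, hu, s, f, hf, rfl⟩ :=
      ih ha0 fun g' hg' hdvd => hP g' hg' (hdvd.mul_left _)
    refine ⟨u * v, hu.mul v.isUnit, s + 1, Fin.cons b f, Fin.cases hb hf, ?_⟩
    rw [Fin.prod_cons]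
    ac_rfl

end UniqueFactorizationMonoid

namespace MvPolynomial

variable {σ : Type*}

theorem prime_X_add_C_mul_X_s19 {R : Type*} [CommRing R] [IsDomain R] {i j : σ} (hij : i ≠ j)
    (a : R) : Prime (X i + C a * X j : MvPolynomial σ R) := by
  classical
  -- the shear `X i ↦ X i + a X j` is an automorphism mapping the prime `X i` to the target
  let shear : R → MvPolynomial σ R →ₐ[R] MvPolynomial σ R := fun a =>
    aeval (Function.update X i (X i + C a * X j))
  have shear_comp : ∀ a, (shear a).comp (shear (-a)) = AlgHom.id R _ := by
    intro a
    refine algHom_ext fun k => ?_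
    by_cases hk : k = i
    · subst hk
      simp [shear, hij.symm]
    · simp [shear, hk]
  let e : MvPolynomial σ R ≃ₐ[R] MvPolynomial σ R :=
    AlgEquiv.ofAlgHom (shear a) (shear (-a)) (shear_comp a) (by simpa using shear_comp (-a))
  simpa [e, shear] using (MulEquiv.prime_iff e.toMulEquiv).mpr (X_prime (i := i))

theorem prime_X_add_X {R : Type*} [CommRing R] [IsDomain R] {i j : σ} (hij : i ≠ j) :
    Prime (X i + X j : MvPolynomial σ R) := by
  simpa using prime_X_add_C_mul_X_s19 hij (1 : R)

theorem prime_X_sub_X {R : Type*} [CommRing R] [IsDomain R] {i j : σ} (hij : i ≠ j) :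
    Prime (X i - X j : MvPolynomial σ R) := by
  simpa [sub_eq_add_neg] using prime_X_add_C_mul_X_s19 hij (-1 : R)

end MvPolynomial

theorem Prime.dvd_of_forall_eval_eq_zero {k σ : Type*} [Field k] [IsAlgClosed k] [Finite σ]
    {g f : MvPolynomial σ k} (hg : Prime g) (h : ∀ x, eval x g = 0 → eval x f = 0) : g ∣ f := by
  have : (Ideal.span {g}).IsPrime := (Ideal.span_singleton_prime hg.ne_zero).mpr hg
  have hf : f ∈ vanishingIdeal k (zeroLocus k (Ideal.span {g})) := fun x hx =>
    h x (hx g (Ideal.mem_span_singleton_self g))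
  rwa [IsPrime.vanishingIdeal_zeroLocus, Ideal.mem_span_singleton] at hf

section BasicQSets

variable {n m : ℕ} (q : Fin m → MvPolynomial (Fin n) ℂ)

def IsBasicQPoly (b : MvPolynomial (Fin n) ℂ) : Prop :=
  (∃ i, b = X i) ∨ (∃ i j, i ≠ j ∧ b = X i - X j) ∨ (∃ i j, i ≠ j ∧ b = X i + X j) ∨
    ∃ l, b = q l

variable {q}

theorem IsBasicQSet.exists_irreducible_isBasicQPoly (hq : ∀ l, Irreducible (q l))
    {W : Set (Fin n → ℂ)} (hW : IsBasicQSet n m q W) :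
    ∃ b, IsBasicQPoly q b ∧ Irreducible b ∧ W = {x | eval x b = 0} := by
  rcases hW with ⟨i, rfl⟩ | ⟨i, j, hij, rfl⟩ | ⟨i, j, hij, rfl⟩ | ⟨l, rfl⟩
  · exact ⟨X i, Or.inl ⟨i, rfl⟩, X_prime.irreducible, by simp⟩
  · exact ⟨X i + X j, Or.inr (Or.inr (Or.inl ⟨i, j, hij, rfl⟩)),
      (prime_X_add_X hij).irreducible, by simp⟩
  · exact ⟨X i - X j, Or.inr (Or.inl ⟨i, j, hij, rfl⟩), (prime_X_sub_X hij).irreducible, by simp⟩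
  · exact ⟨q l, Or.inr (Or.inr (Or.inr ⟨l, rfl⟩)), hq l, rfl⟩

theorem exists_associated_isBasicQPoly_of_prime_dvd (hq : ∀ l, Irreducible (q l))
    {p : MvPolynomial (Fin n) ℂ} (hp : p ≠ 0) {K : ℕ} {r : Fin K → ℕ}
    {H : (i : Fin K) → Fin (r i) → Set (Fin n → ℂ)} (hH : ∀ i j, IsBasicQSet n m q (H i j))
    (hV : {x | eval x p = 0} = ⋃ i, ⋂ j, H i j) {g : MvPolynomial (Fin n) ℂ} (hg : Prime g)
    (hgp : g ∣ p) : ∃ b, Associated g b ∧ IsBasicQPoly q b := by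
  choose b hb hirr hHb using fun i j => (hH i j).exists_irreducible_isBasicQPoly hq
  simp only [hHb] at hV
  -- an empty intersection is all of `ℂⁿ`, on which `p ≠ 0` cannot vanish
  have hr : ∀ i, Nonempty (Fin (r i)) := by
    refine fun i => not_isEmpty_iff.mp fun hi => hp (funext fun x => ?_)
    have hx : x ∈ ⋃ i, ⋂ j, {x | eval x (b i j) = 0} :=
      Set.mem_iUnion.mpr ⟨i, Set.mem_iInter.mpr hi.elim⟩
    simpa [← hV] using hx
  have hdvd : g ∣ ∏ i, ∏ j, b i j := by
    refine hg.dvd_of_forall_eval_eq_zero fun x hx => ?_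
    have : x ∈ {x | eval x p = 0} := by obtain ⟨f, rfl⟩ := hgp; simp [hx]
    rw [hV] at this
    obtain ⟨i, hi⟩ := Set.mem_iUnion.mp this
    obtain ⟨j⟩ := hr i
    simp only [map_prod]
    exact Finset.prod_eq_zero (Finset.mem_univ i) (Finset.prod_eq_zero (Finset.mem_univ j)
      (Set.mem_iInter.mp hi j))
  obtain ⟨i, -, hi⟩ := hg.exists_mem_finset_dvd hdvd
  obtain ⟨j, -, hj⟩ := hg.exists_mem_finset_dvd hi
  exact ⟨b i j, hg.irreducible.associated_of_dvd (hirr i j) hj, hb i j⟩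

end BasicQSets

theorem stmt_19_general (n m : ℕ)
    (q : Fin m → MvPolynomial (Fin n) ℂ)
    (hq : ∀ l, 0 < (q l).totalDegree ∧ Irreducible (q l))
    (p : MvPolynomial (Fin n) ℂ) (hp : 0 < p.totalDegree)
    (K : ℕ) (r : Fin K → ℕ) (H : (i : Fin K) → Fin (r i) → Set (Fin n → ℂ))
    (hH : ∀ i j, IsBasicQSet n m q (H i j))
    (hV : {x | MvPolynomial.eval x p = 0} = ⋃ i, ⋂ j, H i j) :
    ∃ c : ℂ, c ≠ 0 ∧ ∃ (s : ℕ) (f : Fin s → MvPolynomial (Fin n) ℂ),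
      (∀ t, ∃ k : ℕ,
        (∃ i, f t = MvPolynomial.X i ^ k) ∨
        (∃ i j, i ≠ j ∧ f t = (MvPolynomial.X i - MvPolynomial.X j) ^ k) ∨
        (∃ i j, i ≠ j ∧ f t = (MvPolynomial.X i + MvPolynomial.X j) ^ k) ∨
        (∃ l, f t = q l ^ k)) ∧
      p = MvPolynomial.C c * ∏ t, f t := by
  have hp0 : p ≠ 0 := by rintro rfl; simp at hp
  obtain ⟨u, hu, s, f, hf, rfl⟩ :=
    UniqueFactorizationMonoid.exists_eq_mul_prod_of_forall_prime_dvd_associated (IsBasicQPoly q)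
      hp0 fun g hg hgp =>
        exists_associated_isBasicQPoly_of_prime_dvd (fun l => (hq l).2) hp0 hH hV hg hgp
  obtain ⟨c, hc, rfl⟩ := isUnit_iff_eq_C_of_isReduced.mp hu
  refine ⟨c, hc.ne_zero, s, f, fun t => ⟨1, ?_⟩, rfl⟩
  simpa only [pow_one, IsBasicQPoly] using hf t

/-- If the variety of a nonconstant complex polynomial `p` is a finite union of
finite intersections of allowable hyperplanes and hypersurfaces `V(q_l)` (the `q_l` being
nonconstant irreducible), then `p` is a nonzero constant times a product of powers of
`x_i`, `x_i - x_j`, `x_i + x_j`, and the `q_l`. -/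
theorem stmt_19 (n m : ℕ) (hn : 1 ≤ n)
    (q : Fin m → MvPolynomial (Fin n) ℂ)
    (hq : ∀ l, 0 < (q l).totalDegree ∧ Irreducible (q l))
    (p : MvPolynomial (Fin n) ℂ) (hp : 0 < p.totalDegree)
    (K : ℕ) (r : Fin K → ℕ) (H : (i : Fin K) → Fin (r i) → Set (Fin n → ℂ))
    (hH : ∀ i j, IsBasicQSet n m q (H i j))
    (hV : {x | MvPolynomial.eval x p = 0} = ⋃ i, ⋂ j, H i j) :
    ∃ c : ℂ, c ≠ 0 ∧ ∃ (s : ℕ) (f : Fin s → MvPolynomial (Fin n) ℂ),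
      (∀ t, ∃ k : ℕ,
        (∃ i, f t = MvPolynomial.X i ^ k) ∨
        (∃ i j, i ≠ j ∧ f t = (MvPolynomial.X i - MvPolynomial.X j) ^ k) ∨
        (∃ i j, i ≠ j ∧ f t = (MvPolynomial.X i + MvPolynomial.X j) ^ k) ∨
        (∃ l, f t = q l ^ k)) ∧
      p = MvPolynomial.C c * ∏ t, f t :=
  stmt_19_general n m q hq p hp K r H hH hV
end
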